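/- arXiv:1703.10755 — 8 statements merged into one kernel-verified Lean document; each statement's English description precedes it below -/
import Mathlib

section
/- Let k, h : ℤ × ℤ → ℂ, written k_i^{(n)} = k(i,n) and h_i^{(m)} = h(i,m). Suppose that (i − m)·k_i^{(n)} = (2n − m − i)·h_{m−n+i}^{(m)} for all m, n, i ∈ ℤ. Then there exists λ ∈ ℂ such that k_i^{(m)} = h_i^{(m)} = δ_{m,i}·λ for all m, i ∈ ℤ. -/
/-! The hypothesis with `n = 2m - i` kills `h` off the diagonal, with `n = m` it then kills `k` off
the diagonal, and with `i = n` it gives `k_n^{(n)} = h_m^{(m)}` whenever `n ≠ m`; since `ℤ` has more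
than two elements, the latter forces both diagonals to be one constant. -/

theorem Function.apply_eq_apply_of_forall_ne {α β : Type*} [Infinite α] {f g : α → β}
    (hfg : ∀ a b, a ≠ b → f a = g b) (a b : α) : f a = g b := by
  classical
  obtain ⟨c, hc⟩ := Infinite.exists_notMem_finset ({a, b} : Finset α)
  obtain ⟨d, hd⟩ := Infinite.exists_notMem_finset ({b, c} : Finset α)
  simp only [Finset.mem_insert, Finset.mem_singleton, not_or] at hc hd
  calc f a = g c := hfg a c (Ne.symm hc.1)
    _ = f d := (hfg d c hd.2).symm
    _ = g b := hfg d b hd.1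

section

variable {k h : ℤ × ℤ → ℂ}
  (hyp : ∀ m n i : ℤ, ((i : ℂ) - m) * k (i, n) = (2 * (n : ℂ) - m - i) * h (m - n + i, m))

include hyp

theorem h_eq_zero_of_ne {j m : ℤ} (hjm : j ≠ m) : h (j, m) = 0 := by
  have H := hyp m (2 * m - j) m
  rw [sub_self, zero_mul, show m - (2 * m - j) + m = j by ring] at H
  have hc : 2 * (((2 * m - j : ℤ)) : ℂ) - m - m = 2 * ((m : ℂ) - j) := by push_cast; ring
  rw [hc] at H
  have hne : (2 : ℂ) * ((m : ℂ) - j) ≠ 0 :=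
    mul_ne_zero two_ne_zero (sub_ne_zero.mpr (by exact_mod_cast hjm.symm))
  exact (mul_eq_zero.mp H.symm).resolve_left hne

theorem k_eq_zero_of_ne {i m : ℤ} (him : i ≠ m) : k (i, m) = 0 := by
  have H := hyp m m i
  rw [sub_self, zero_add, h_eq_zero_of_ne hyp him, mul_zero] at H
  exact (mul_eq_zero.mp H).resolve_left (sub_ne_zero.mpr (by exact_mod_cast him))

theorem k_diag_eq_h_diag {n m : ℤ} (hnm : n ≠ m) : k (n, n) = h (m, m) := by
  have H := hyp m n n
  rw [sub_add_cancel, show 2 * (n : ℂ) - m - n = n - m by ring] at H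
  exact mul_left_cancel₀ (sub_ne_zero.mpr (by exact_mod_cast hnm)) H

end

/-- Lemma 2.1: if `(i − m)·k_i^{(n)} = (2n − m − i)·h_{m−n+i}^{(m)}` for all `m, n, i ∈ ℤ`,
then there is `λ ∈ ℂ` with `k_i^{(m)} = h_i^{(m)} = δ_{m,i}·λ`. -/
theorem stmt0 (k h : ℤ × ℤ → ℂ)
    (hyp : ∀ m n i : ℤ,
      ((i : ℂ) - (m : ℂ)) * k (i, n) =
        (2 * (n : ℂ) - (m : ℂ) - (i : ℂ)) * h (m - n + i, m)) :
    ∃ lam : ℂ, ∀ m i : ℤ,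
      k (i, m) = (if m = i then lam else 0) ∧
      h (i, m) = (if m = i then lam else 0) := by
  have diag := Function.apply_eq_apply_of_forall_ne (f := fun n => k (n, n)) (g := fun m => h (m, m))
    fun _ _ => k_diag_eq_h_diag hyp
  refine ⟨k (0, 0), fun m i => ?_⟩
  split_ifs with hmi
  · subst hmi
    exact ⟨(diag m 0).trans (diag 0 0).symm, (diag 0 m).symm⟩
  · exact ⟨k_eq_zero_of_ne hyp (Ne.symm hmi), h_eq_zero_of_ne hyp (Ne.symm hmi)⟩
end

section
/- Let t, g : ℤ × ℤ → ℂ, written t_i^{(n)} = t(i,n) and g_i^{(m)} = g(i,m), and let ρ₂, ρ₃, θ₂, θ₃ : ℤ → ℂ. Suppose that: (1) i·t_i^{(n)} = −(m − n + i)·g_{m−n+i}^{(m)} for all i, m, n ∈ ℤ with i ≠ 0 and i ≠ n − m; (2) (m − 1)·ρ₂(n) + m·ρ₃(n) = −(m − n)·g_{m−n}^{(m)} for all m, n ∈ ℤ; (3) (n − 1)·θ₂(m) + n·θ₃(m) = (n − m)·t_{n−m}^{(n)} for all m, n ∈ ℤ. Then there exists a function μ : ℤ → ℂ such that for all n ∈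 ℤ and all k ∈ ℤ with k ≠ −n one has t_{n+k}^{(n)} = μ(k)/(n + k) and g_{n+k}^{(n)} = −μ(k)/(n + k), and for all n ∈ ℤ one has ρ₂(n) = θ₂(n) = −μ(−n) and ρ₃(n) = θ₃(n) = μ(−n). -/
/-!
Put `μ k := t(1, 1 - k)`. Equation (1) with `i = 1` and `m = n` gives `t(1, ·) = -g(1, ·)`; with
`(i, m) = (n + k, 1 - k)`, and with `(i, m, n) = (1, n, 1 - k)`, it expresses
`(n + k) t(n + k, n)` and `(n + k) g(n + k, n)` through `g(1, 1 - k)` and `t(1, 1 - k)`, i.e. as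
`±μ k`. Evaluating (2) and (3) with the other index equal to `n + 1` and `n + 2` then gives two
linear equations for `(ρ₂ n, ρ₃ n)` (resp. `(θ₂ n, θ₃ n)`) whose determinant is `-1`.
-/

lemma eq_neg_and_eq_of_consecutive_coeffs {R : Type*} [CommRing R] {x a b c : R}
    (h₁ : x * a + (x + 1) * b = c) (h₂ : (x + 1) * a + (x + 2) * b = c) :
    a = -c ∧ b = c :=
  ⟨by linear_combination (x + 1) * h₂ - (x + 2) * h₁,
    by linear_combination (x + 1) * h₁ - x * h₂⟩

section SolutionOfEquationOne

variable {t g : ℤ × ℤ → ℂ}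

lemma t_one_eq_neg_g_one
    (h1 : ∀ i m n : ℤ, i ≠ 0 → i ≠ n - m →
      (i : ℂ) * t (i, n) = -(((m : ℂ) - (n : ℂ) + (i : ℂ)) * g (m - n + i, m)))
    (m : ℤ) : t (1, m) = -g (1, m) := by
  simpa using h1 1 m m one_ne_zero (by omega)

lemma add_mul_t_eq_t_one
    (h1 : ∀ i m n : ℤ, i ≠ 0 → i ≠ n - m →
      (i : ℂ) * t (i, n) = -(((m : ℂ) - (n : ℂ) + (i : ℂ)) * g (m - n + i, m)))
    {n k : ℤ} (hk : k ≠ -n) : ((n : ℂ) + k) * t (n + k, n) = t (1, 1 - k) := by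
  have h := h1 (n + k) (1 - k) n (by omega) (by omega)
  rw [show 1 - k - n + (n + k) = 1 by ring] at h
  push_cast at h
  rw [t_one_eq_neg_g_one h1, h]
  ring

lemma add_mul_g_eq_neg_t_one
    (h1 : ∀ i m n : ℤ, i ≠ 0 → i ≠ n - m →
      (i : ℂ) * t (i, n) = -(((m : ℂ) - (n : ℂ) + (i : ℂ)) * g (m - n + i, m)))
    {n k : ℤ} (hk : k ≠ -n) : ((n : ℂ) + k) * g (n + k, n) = -t (1, 1 - k) := by
  have h := h1 1 n (1 - k) one_ne_zero (by omega)
  rw [show n - (1 - k) + 1 = n + k by ring] at h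
  push_cast at h
  linear_combination h

end SolutionOfEquationOne

lemma eq_neg_and_eq_of_add_mul_eq {φ₂ φ₃ : ℤ → ℂ} {s : ℤ × ℤ → ℂ} {μ : ℤ → ℂ}
    (hφ : ∀ m n : ℤ, ((n : ℂ) - 1) * φ₂ m + (n : ℂ) * φ₃ m = ((n : ℂ) - (m : ℂ)) * s (n - m, n))
    (hs : ∀ n k : ℤ, k ≠ -n → ((n : ℂ) + k) * s (n + k, n) = μ k) (m : ℤ) :
    φ₂ m = -μ (-m) ∧ φ₃ m = μ (-m) := by
  have hs' (j : ℤ) (hj : j ≠ 0) : (j : ℂ) * s (j, m + j) = μ (-m) := by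
    simpa using hs (m + j) (-m) (by omega)
  have h₁ := hφ m (m + 1)
  have h₂ := hφ m (m + 2)
  rw [show m + 1 - m = 1 by ring] at h₁
  rw [show m + 2 - m = 2 by ring] at h₂
  push_cast at h₁ h₂ hs'
  exact eq_neg_and_eq_of_consecutive_coeffs (x := (m : ℂ))
    (by linear_combination h₁ + hs' 1 one_ne_zero) (by linear_combination h₂ + hs' 2 two_ne_zero)

/-- Lemma 2.2: solving the system of equations arising from the `(L, L)` component of a
biderivation of `W(0,0)`. -/
theorem stmt1 (t g : ℤ × ℤ → ℂ) (ρ₂ ρ₃ θ₂ θ₃ : ℤ → ℂ)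
    (h1 : ∀ i m n : ℤ, i ≠ 0 → i ≠ n - m →
      (i : ℂ) * t (i, n) = -(((m : ℂ) - (n : ℂ) + (i : ℂ)) * g (m - n + i, m)))
    (h2 : ∀ m n : ℤ,
      ((m : ℂ) - 1) * ρ₂ n + (m : ℂ) * ρ₃ n = -(((m : ℂ) - (n : ℂ)) * g (m - n, m)))
    (h3 : ∀ m n : ℤ,
      ((n : ℂ) - 1) * θ₂ m + (n : ℂ) * θ₃ m = ((n : ℂ) - (m : ℂ)) * t (n - m, n)) :
    ∃ μ : ℤ → ℂ,
      (∀ n k : ℤ, k ≠ -n →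
        t (n + k, n) = μ k / ((n : ℂ) + (k : ℂ)) ∧
        g (n + k, n) = -(μ k / ((n : ℂ) + (k : ℂ)))) ∧
      (∀ n : ℤ, ρ₂ n = -μ (-n) ∧ θ₂ n = -μ (-n) ∧ ρ₃ n = μ (-n) ∧ θ₃ n = μ (-n)) := by
  set μ : ℤ → ℂ := fun k => t (1, 1 - k)
  refine ⟨μ, fun n k hk => ?_, fun n => ?_⟩
  · have hnk : (n : ℂ) + k ≠ 0 := by exact_mod_cast (show n + k ≠ 0 by omega)
    rw [← neg_div]
    exact ⟨eq_div_of_mul_eq hnk (by rw [mul_comm, add_mul_t_eq_t_one h1 hk]),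
      eq_div_of_mul_eq hnk (by rw [mul_comm, add_mul_g_eq_neg_t_one h1 hk])⟩
  · have hρ := eq_neg_and_eq_of_add_mul_eq (s := fun p => -g p) (μ := μ)
      (fun m n => by rw [h2 n m]; ring) (fun n k hk => by simp [add_mul_g_eq_neg_t_one h1 hk, μ]) n
    have hθ := eq_neg_and_eq_of_add_mul_eq h3 (fun n k hk => add_mul_t_eq_t_one h1 hk) n
    exact ⟨hρ.1, hθ.1, hρ.2, hθ.2⟩
end

section
/- Let L be a perfect Lie algebra over ℂ (i.e. [L, L] = L) and let f be a biderivation of L. If α belongs to the center Z(L) of L, then f(x, α) = f(α, x) = 0 for all x ∈ L. -/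
/-!
A central element `α` kills the second argument of every bracket, so the biderivation identities
`f x [y, α] = [f x y, α] + [y, f x α]` and `f [α, y] z = [α, f y z] + [f α z, y]` show that
`f x α` and `f α z` are central. Then the derivation rules give `f [a, b] α = 0` and
`f α [a, b] = 0`, and the linear maps `f · α` and `f α` vanish because brackets span `L`.
-/

open LieAlgebra LieModule

section

variable {R L : Type*} [CommRing R] [LieRing L] [LieAlgebra R L]

lemma lie_eq_zero_of_mem_center_left {α : L} (hα : α ∈ center R L) (y : L) : ⁅α, y⁆ = 0 := by
  rw [← lie_skew, (mem_maxTrivSubmodule R L L α).mp hα y, neg_zero]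

lemma lie_eq_zero_of_mem_center_right {α : L} (hα : α ∈ center R L) (y : L) : ⁅y, α⁆ = 0 :=
  (mem_maxTrivSubmodule R L L α).mp hα y

lemma LinearMap.eq_zero_of_map_lie_eq_zero {M : Type*} [AddCommGroup M] [Module R M]
    (hperf : Submodule.span R {z : L | ∃ a b : L, z = ⁅a, b⁆} = ⊤) (g : L →ₗ[R] M)
    (hg : ∀ a b : L, g ⁅a, b⁆ = 0) : g = 0 :=
  LinearMap.ext_on hperf fun _ ⟨a, b, hz⟩ ↦ hz ▸ hg a b

variable (f : L →ₗ[R] L →ₗ[R] L) {α : L}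

lemma apply_mem_center_of_mem_center_right (hα : α ∈ center R L)
    (hf2 : ∀ x y z : L, f x ⁅y, z⁆ = ⁅f x y, z⁆ + ⁅y, f x z⁆) (x : L) :
    f x α ∈ center R L := by
  refine (mem_maxTrivSubmodule R L L _).mpr fun y ↦ ?_
  have h := hf2 x y α
  rwa [lie_eq_zero_of_mem_center_right hα, map_zero, lie_eq_zero_of_mem_center_right hα,
    zero_add, eq_comm] at h

lemma apply_mem_center_of_mem_center_left (hα : α ∈ center R L)
    (hf1 : ∀ x y z : L, f ⁅x, y⁆ z = ⁅x, f y z⁆ + ⁅f x z, y⁆) (z : L) :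
    f α z ∈ center R L := by
  refine (mem_maxTrivSubmodule R L L _).mpr fun y ↦ ?_
  have h := hf1 α y z
  rwa [lie_eq_zero_of_mem_center_left hα, map_zero, LinearMap.zero_apply,
    lie_eq_zero_of_mem_center_left hα, zero_add, eq_comm, ← lie_skew, neg_eq_zero] at h

end

/-- Lemma 2.4: if `L` is a perfect Lie algebra over `ℂ`, `f` is a biderivation of `L` and
`α ∈ Z(L)`, then `f(x, α) = f(α, x) = 0` for all `x ∈ L`. -/
theorem stmt3 {L : Type*} [LieRing L] [LieAlgebra ℂ L]
    (hperf : Submodule.span ℂ {z : L | ∃ a b : L, z = ⁅a, b⁆} = ⊤)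
    (f : L →ₗ[ℂ] L →ₗ[ℂ] L)
    (hf1 : ∀ x y z : L, f ⁅x, y⁆ z = ⁅x, f y z⁆ + ⁅f x z, y⁆)
    (hf2 : ∀ x y z : L, f x ⁅y, z⁆ = ⁅f x y, z⁆ + ⁅y, f x z⁆)
    (α : L) (hα : α ∈ LieAlgebra.center ℂ L) :
    ∀ x : L, f x α = 0 ∧ f α x = 0 := by
  have hflip : f.flip α = 0 := LinearMap.eq_zero_of_map_lie_eq_zero hperf _ fun a b ↦ by
    have hc := apply_mem_center_of_mem_center_right f hα hf2
    rw [LinearMap.flip_apply, hf1, lie_eq_zero_of_mem_center_right (hc b),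
      lie_eq_zero_of_mem_center_left (hc a), add_zero]
  have hleft : f α = 0 := LinearMap.eq_zero_of_map_lie_eq_zero hperf _ fun a b ↦ by
    have hc := apply_mem_center_of_mem_center_left f hα hf1
    rw [hf2, lie_eq_zero_of_mem_center_left (hc a), lie_eq_zero_of_mem_center_right (hc b),
      add_zero]
  exact fun x ↦ ⟨LinearMap.congr_fun hflip x, LinearMap.congr_fun hleft x⟩
end

section
/- Let D be a derivation of the Lie algebra W(0,0), i.e. a linear map D : W(0,0) → W(0,0) with D([x,y]) = [D(x), y] + [x, D(y)] for all x, y. Then there exist an element u ∈ W(0,0) and complex numbers c₁, c₂, c₃ such that for all m ∈ ℤ: D(L_m) = [u, L_m] + c₂·(m − 1)·I_m + c₃·m·I_m and D(I_m) = [u, I_m] + c₁·I_m. -/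
/-!
`ad L₀` acts diagonally on the basis, with eigenvalue `-n` on `L n` and `I n`. Subtracting an
inner derivation we may assume that `D (L 0)` lies in the weight-zero space `span {L 0, I 0}`;
the Leibniz rule for `⁅L 0, L 1⁆` then forces `D (L 0) ∈ ℂ ∙ I 0`, so `D` commutes with `ad L₀`
and preserves every weight space `span {L m, I m}`. Writing `D (L m) = α m • L m + β m • I m` and
`D (I m) = γ m • L m + δ m • I m`, the Leibniz rule on pairs of basis vectors turns into functional
equations on `ℤ`: `α` is additive, `β` is affine, `γ = 0` and `δ m = δ 1 + (m - 1) α 1`. The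
linear part `m ↦ m α 1` is the inner derivation `ad (-(α 1) • L 0)`.
-/

theorem apply_eq_mul_apply_one_of_map_add_of_ne {K : Type*} [Field K] [CharZero K] {f : ℤ → K}
    (hf : ∀ m n : ℤ, m ≠ n → f (m + n) = f m + f n) (m : ℤ) : f m = m * f 1 := by
  have h0 : f 0 = 0 := by simpa using hf 1 0 one_ne_zero
  -- `f 2 = f (1 + 1)` is the one value of the form `f (k + 1)` not covered by `hf`.
  have h2 : f 2 = 2 * f 1 := by
    have h3 := hf 1 2 (by decide)
    have h4 := hf 1 3 (by decide)
    have h5 := hf 2 3 (by decide)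
    have h5' := hf 1 4 (by decide)
    norm_num at h3 h4 h5 h5'
    linear_combination h4 - h5 + h5'
  have hsucc : ∀ k : ℤ, f (k + 1) = f k + f 1 := fun k => by
    rcases eq_or_ne k 1 with rfl | hk
    · rw [one_add_one_eq_two, h2]; ring
    · exact hf k 1 hk
  induction m using Int.induction_on with
  | zero => simp [h0]
  | succ k ih => rw [hsucc, ih]; push_cast; ring
  | pred k ih =>
    have := hsucc (-k - 1)
    rw [sub_add_cancel, ih] at this
    push_cast at this ⊢
    linear_combination -this

theorem apply_eq_add_mul_of_sub_mul_apply_add {K : Type*} [Field K] [CharZero K] {f : ℤ → K}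
    (hf : ∀ m n : ℤ, ((m : K) - n) * f (m + n) = m * f m - n * f n) (m : ℤ) :
    f m = f 0 + m * (f 1 - f 0) := by
  -- `hf m 1` and `hf (m + 1) (-1)` are a linear system in `f m`, `f (m + 1)` of determinant `2`.
  have e1 := hf m 1
  have e2 := hf (m + 1) (-1)
  have e3 := hf 1 (-1)
  push_cast at e1 e2 e3
  norm_num at e1 e2 e3
  have : (2 : K) * (f m - (f 0 + m * (f 1 - f 0))) = 0 := by
    linear_combination -(↑m + 1) * e1 - (↑m - 1) * e2 + (↑m - 1) * e3
  simpa [sub_eq_zero] using this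

namespace W00

variable {K W : Type*} [Field K] [LieRing W] [LieAlgebra K W]

def degree : ℤ ⊕ ℤ → ℤ := Sum.elim id id

structure IsStdBasis (b : Module.Basis (ℤ ⊕ ℤ) K W) (L I : ℤ → W) : Prop where
  L_eq : ∀ n, L n = b (.inl n)
  I_eq : ∀ n, I n = b (.inr n)
  lie_L_L : ∀ m n : ℤ, ⁅L m, L n⁆ = ((m : K) - n) • L (m + n)
  lie_L_I : ∀ m n : ℤ, ⁅L m, I n⁆ = (-(n : K)) • I (m + n)
  lie_I_I : ∀ m n : ℤ, ⁅I m, I n⁆ = 0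

namespace IsStdBasis

variable {b : Module.Basis (ℤ ⊕ ℤ) K W} {L I : ℤ → W}

theorem repr_L (h : IsStdBasis b L I) (m : ℤ) : b.repr (L m) = Finsupp.single (.inl m) 1 := by
  rw [h.L_eq, b.repr_self]

theorem repr_I (h : IsStdBasis b L I) (m : ℤ) : b.repr (I m) = Finsupp.single (.inr m) 1 := by
  rw [h.I_eq, b.repr_self]

theorem lie_I_L (h : IsStdBasis b L I) (m n : ℤ) : ⁅I m, L n⁆ = (m : K) • I (m + n) := by
  rw [← lie_skew, h.lie_L_I, add_comm, neg_smul, neg_neg]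

theorem lie_L_zero_basis (h : IsStdBasis b L I) (i : ℤ ⊕ ℤ) :
    ⁅L 0, b i⁆ = (-(degree i : K)) • b i := by
  rcases i with n | n
  · rw [← h.L_eq, h.lie_L_L, zero_add]; simp [degree]
  · rw [← h.I_eq, h.lie_L_I, zero_add]; simp [degree]

theorem repr_lie_L_zero (h : IsStdBasis b L I) (x : W) (i : ℤ ⊕ ℤ) :
    b.repr ⁅L 0, x⁆ i = -(degree i : K) * b.repr x i := by
  have hmaps : Finsupp.lapply i ∘ₗ b.repr.toLinearMap ∘ₗ LieModule.toEnd K W W (L 0)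
      = (-(degree i : K)) • (Finsupp.lapply i ∘ₗ b.repr.toLinearMap) := by
    refine b.ext fun j => ?_
    simp only [LinearMap.comp_apply, LieModule.toEnd_apply_apply, h.lie_L_zero_basis,
      LinearMap.smul_apply, map_smul, LinearEquiv.coe_coe, b.repr_self, Finsupp.lapply_apply,
      Finsupp.single_apply, smul_eq_mul]
    split_ifs with hji
    · rw [hji]
    · simp
  simpa using DFunLike.congr_fun hmaps x

theorem eq_of_repr_eq_zero (h : IsStdBasis b L I) {x : W} {m : ℤ}
    (hx : ∀ i, degree i ≠ m → b.repr x i = 0) :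
    x = b.repr x (.inl m) • L m + b.repr x (.inr m) • I m := by
  refine b.ext_elem_iff.2 fun i => ?_
  rcases i with n | n <;> rcases eq_or_ne n m with rfl | hnm <;>
    simp_all [h.repr_L, h.repr_I, degree]

theorem repr_eq_zero_of_lie_L_zero_eq [CharZero K] (h : IsStdBasis b L I) {x : W} {m : ℤ}
    (hx : ⁅L 0, x⁆ = (-(m : K)) • x) {i : ℤ ⊕ ℤ} (hi : degree i ≠ m) : b.repr x i = 0 := by
  have hcoord := congr_arg (b.repr · i) hx
  simp only [h.repr_lie_L_zero, map_smul, Finsupp.smul_apply, smul_eq_mul] at hcoord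
  have hne : (m : K) - degree i ≠ 0 := sub_ne_zero.2 (by exact_mod_cast hi.symm)
  have hzero : ((m : K) - degree i) * b.repr x i = 0 := by linear_combination hcoord
  exact (mul_eq_zero.1 hzero).resolve_left hne

theorem exists_eq_of_lie_L_zero_eq [CharZero K] (h : IsStdBasis b L I) {x : W} {m : ℤ}
    (hx : ⁅L 0, x⁆ = (-(m : K)) • x) : ∃ α β : K, x = α • L m + β • I m :=
  ⟨_, _, h.eq_of_repr_eq_zero fun _ hi => h.repr_eq_zero_of_lie_L_zero_eq hx hi⟩

theorem smul_add_smul_inj (h : IsStdBasis b L I) {m : ℤ} {α β α' β' : K}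
    (he : α • L m + β • I m = α' • L m + β' • I m) : α = α' ∧ β = β' := by
  have hL := congr_arg (b.repr · (.inl m)) he
  have hI := congr_arg (b.repr · (.inr m)) he
  simpa [h.repr_L, h.repr_I] using And.intro hL hI

theorem exists_sub_lie_L_zero_eq [CharZero K] (h : IsStdBasis b L I) (x : W) :
    ∃ u : W, ∃ α β : K, x - ⁅u, L 0⁆ = α • L 0 + β • I 0 := by
  -- Division by `degree i = 0` gives `0`, so exactly the weight-zero coordinates of `x` survive.
  let c : (ℤ ⊕ ℤ) →₀ K := Finsupp.onFinset (b.repr x).support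
    (fun i => b.repr x i / degree i) (fun i hi => by
      contrapose! hi
      simp [Finsupp.notMem_support_iff.1 hi])
  refine ⟨b.repr.symm c, _, _, h.eq_of_repr_eq_zero fun i hi => ?_⟩
  rw [map_sub, Finsupp.sub_apply, ← lie_skew, map_neg, Finsupp.neg_apply, h.repr_lie_L_zero,
    b.repr.apply_symm_apply, Finsupp.onFinset_apply]
  field_simp
  ring

variable (E : LieDerivation K W W)

theorem coeff_L_eq_zero_of_apply_L_zero (h : IsStdBasis b L I) {α β : K}
    (hE : E (L 0) = α • L 0 + β • I 0) : α = 0 := by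
  have hlie := E.apply_lie_eq_add (L 0) (L 1)
  rw [h.lie_L_L, hE, add_lie, smul_lie, smul_lie, h.lie_L_L, h.lie_I_L] at hlie
  have hcoord := congr_arg (b.repr · (.inl 1)) hlie
  simpa [h.repr_lie_L_zero, h.repr_L, degree] using hcoord

theorem lie_L_zero_apply_L (h : IsStdBasis b L I) {β : K} (hE : E (L 0) = β • I 0) (m : ℤ) :
    ⁅L 0, E (L m)⁆ = (-(m : K)) • E (L m) := by
  have hlie := E.apply_lie_eq_add (L 0) (L m)
  rw [h.lie_L_L, hE, smul_lie, h.lie_I_L, map_smul] at hlie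
  simp only [Int.cast_zero, zero_sub, zero_add, neg_smul, zero_smul, smul_zero, add_zero] at hlie
  linear_combination (norm := module) -hlie

theorem lie_L_zero_apply_I (h : IsStdBasis b L I) {β : K} (hE : E (L 0) = β • I 0) (m : ℤ) :
    ⁅L 0, E (I m)⁆ = (-(m : K)) • E (I m) := by
  have hlie := E.apply_lie_eq_add (L 0) (I m)
  rw [h.lie_L_I, hE, smul_lie, h.lie_I_I, map_smul] at hlie
  simp only [zero_add, neg_smul, smul_zero, add_zero] at hlie
  linear_combination (norm := module) -hlie

variable {α β γ δ : ℤ → K}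

theorem coeffs_lie_L_L (h : IsStdBasis b L I) (hEL : ∀ m, E (L m) = α m • L m + β m • I m)
    (m n : ℤ) :
    ((m : K) - n) * α (m + n) = (m - n) * (α m + α n) ∧
      ((m : K) - n) * β (m + n) = m * β m - n * β n := by
  apply h.smul_add_smul_inj
  have hlie := E.apply_lie_eq_add (L m) (L n)
  simp only [h.lie_L_L, map_smul, hEL, lie_add, add_lie, lie_smul, smul_lie, h.lie_L_I,
    h.lie_I_L] at hlie
  linear_combination (norm := module) hlie

theorem coeffs_lie_L_I (h : IsStdBasis b L I) (hEL : ∀ m, E (L m) = α m • L m + β m • I m)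
    (hEI : ∀ m, E (I m) = γ m • L m + δ m • I m) (m n : ℤ) :
    -(n : K) * γ (m + n) = (m - n) * γ n ∧ -(n : K) * δ (m + n) = -n * (α m + δ n) := by
  apply h.smul_add_smul_inj
  have hlie := E.apply_lie_eq_add (L m) (I n)
  simp only [h.lie_L_L, h.lie_L_I, h.lie_I_I, map_smul, hEL, hEI, lie_add, add_lie, lie_smul,
    smul_lie, smul_zero] at hlie
  linear_combination (norm := module) hlie

theorem coeffs_lie_I_I (h : IsStdBasis b L I) (hEI : ∀ m, E (I m) = γ m • L m + δ m • I m)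
    (m n : ℤ) : (m : K) * γ n = n * γ m := by
  have hlie := E.apply_lie_eq_add (I m) (I n)
  simp only [h.lie_L_I, h.lie_I_I, map_zero, hEI, lie_add, add_lie, lie_smul, smul_lie,
    h.lie_I_L, smul_zero, add_zero] at hlie
  refine (h.smul_add_smul_inj (m := m + n) (α := 0) (α' := 0) ?_).2
  linear_combination (norm := module) -hlie

theorem exists_apply_eq_of_apply_L_zero [CharZero K] (h : IsStdBasis b L I) {α₀ β₀ : K}
    (hE : E (L 0) = α₀ • L 0 + β₀ • I 0) :
    ∃ a c₁ c₂ c₃ : K, ∀ m : ℤ,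
      E (L m) = (a * m) • L m + (c₂ * (m - 1) + c₃ * m) • I m ∧ E (I m) = (a * m + c₁) • I m := by
  obtain rfl : α₀ = 0 := h.coeff_L_eq_zero_of_apply_L_zero E hE
  rw [zero_smul, zero_add] at hE
  choose α β hEL using fun m => h.exists_eq_of_lie_L_zero_eq (h.lie_L_zero_apply_L E hE m)
  choose γ δ hEI using fun m => h.exists_eq_of_lie_L_zero_eq (h.lie_L_zero_apply_I E hE m)
  have hα (m : ℤ) : α m = m * α 1 :=
    apply_eq_mul_apply_one_of_map_add_of_ne (fun m n hmn =>
      mul_left_cancel₀ (sub_ne_zero.2 (Int.cast_injective.ne hmn))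
        (h.coeffs_lie_L_L E hEL m n).1) m
  have hβ (m : ℤ) : β m = β 0 + m * (β 1 - β 0) :=
    apply_eq_add_mul_of_sub_mul_apply_add (fun m n => (h.coeffs_lie_L_L E hEL m n).2) m
  have hγ (m : ℤ) : γ m = 0 := by
    have h₂ := (h.coeffs_lie_L_I E hEL hEI 1 1).1
    have h₁₂ := h.coeffs_lie_I_I E hEI 1 2
    have h₁ₘ := h.coeffs_lie_I_I E hEI 1 m
    norm_num at h₂ h₁₂ h₁ₘ
    linear_combination h₁ₘ - (m : K) / 2 * h₁₂ + (m : K) / 2 * h₂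
  have hδ (m : ℤ) : δ m = (m - 1) * α 1 + δ 1 := by
    have h₁ := (h.coeffs_lie_L_I E hEL hEI (m - 1) 1).2
    rw [sub_add_cancel, hα] at h₁
    push_cast at h₁
    linear_combination -h₁
  refine ⟨α 1, δ 1 - α 1, -β 0, β 1, fun m => ⟨?_, ?_⟩⟩
  · rw [hEL, hα, hβ]
    module
  · rw [hEI, hγ, hδ]
    module

end IsStdBasis

end W00

/-- Lemma 3.3 (Shen–Jiang): every derivation of the Lie algebra `W(0,0)` is the sum of an
inner derivation and a linear combination of the outer derivations `D₁, D₂^{0,0}, D₃`. -/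
theorem stmt5 {W : Type*} [LieRing W] [LieAlgebra ℂ W]
    (b : Module.Basis (ℤ ⊕ ℤ) ℂ W) (L I : ℤ → W)
    (hL : ∀ n : ℤ, L n = b (Sum.inl n))
    (hI : ∀ n : ℤ, I n = b (Sum.inr n))
    (hLL : ∀ m n : ℤ, ⁅L m, L n⁆ = ((m : ℂ) - (n : ℂ)) • L (m + n))
    (hLI : ∀ m n : ℤ, ⁅L m, I n⁆ = (-(n : ℂ)) • I (m + n))
    (hII : ∀ m n : ℤ, ⁅I m, I n⁆ = 0)
    (D : W →ₗ[ℂ] W)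
    (hD : ∀ x y : W, D ⁅x, y⁆ = ⁅D x, y⁆ + ⁅x, D y⁆) :
    ∃ (u : W) (c₁ c₂ c₃ : ℂ), ∀ m : ℤ,
      D (L m) = ⁅u, L m⁆ + (c₂ * ((m : ℂ) - 1)) • I m + (c₃ * (m : ℂ)) • I m ∧
      D (I m) = ⁅u, I m⁆ + c₁ • I m := by
  have h : W00.IsStdBasis b L I := ⟨hL, hI, hLL, hLI, hII⟩
  let E : LieDerivation ℂ W W := ⟨D, fun x y => by rw [hD, ← lie_skew (D x), neg_add_eq_sub]⟩
  obtain ⟨u, α, β, hu⟩ := h.exists_sub_lie_L_zero_eq (D (L 0))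
  obtain ⟨a, c₁, c₂, c₃, hE⟩ :=
    h.exists_apply_eq_of_apply_L_zero (E - LieDerivation.ad ℂ W u) (by simpa [E] using hu)
  refine ⟨u - a • L 0, c₁, c₂, c₃, fun m => ?_⟩
  obtain ⟨hEL, hEI⟩ := hE m
  simp only [LieDerivation.coe_sub, LieDerivation.mk_coe, Pi.sub_apply,
    LieDerivation.ad_apply_apply, E] at hEL hEI
  constructor
  · rw [sub_lie, smul_lie, hLL, zero_add]
    linear_combination (norm := module) hEL
  · rw [sub_lie, smul_lie, hLI, zero_add]
    linear_combination (norm := module) hEI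
end

section
/- Let f be a biderivation of the Lie algebra W(0,0). Then there exist linear maps φ, ψ : W(0,0) → W(0,0) and linear functionals ρ₁, ρ₂, ρ₃, θ₁, θ₂, θ₃ : W(0,0) → ℂ such that for all x, y ∈ W(0,0): f(x, y) = ρ₁(x)·D₁(y) + ρ₂(x)·D₂(y) + ρ₃(x)·D₃(y) + [φ(x), y] and also f(x, y) = θ₁(y)·D₁(x) + θ₂(y)·D₂(x) + θ₃(y)·D₃(x) + [x, ψ(y)], where D₁, D₂, D₃ are the linear maps on W(0,0) determined on the basis by D₁(L_m) = 0, D₁(I_m) = I_m, D₂(L_m) = (m − 1)·I_m, D₂(I_m) = 0, D₃(L_m) = m·I_m, D₃(I_m) = 0 for all m ∈ ℤ. -/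
/-!
For fixed `x`, `y ↦ f x y` is a derivation of `W(0,0)`, and so is `x ↦ f x y` for fixed `y`.
Every derivation `D` is `ad u + r₁ D₁ + r₂ D₂ + r₃ D₃`: the operator `ad (L 0)` is diagonal in the
basis with eigenvalue `-n` on `L n` and `I n`, so after subtracting an inner derivation `D (L 0)`
lies in the `0`-eigenspace. Then `D` commutes with `ad (L 0)` and preserves the weight spaces
`span {L n, I n}`, and the Leibniz rule on `⁅L m, L n⁆` and `⁅L m, I n⁆` gives functional
equations on the four coefficient sequences, whose solutions are affine in `n`.
Finally `(r, u) ↦ ∑ rᵢ Dᵢ + ad u` is linear and its range contains every `f x`; vector spaces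
being projective, `f` lifts linearly through it, which makes `φ` and the `ρᵢ` linear.
-/

namespace Module.Basis

variable {ι R M : Type*} [CommRing R] [AddCommGroup M] [Module R M]
  (b : Basis ι R M) {T : M →ₗ[R] M} {μ : ι → R}

theorem repr_apply_eq_mul_of_apply_eq_smul (hT : ∀ i, T (b i) = μ i • b i) (x : M) (i : ι) :
    b.repr (T x) i = μ i * b.repr x i := by
  have : b.coord i ∘ₗ T = μ i • b.coord i := b.ext fun j => by
    by_cases hij : j = i <;> simp [hT, hij]
  exact LinearMap.congr_fun this x

theorem repr_eq_zero_of_apply_eq_smul [NoZeroDivisors R] (hT : ∀ i, T (b i) = μ i • b i)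
    {x : M} {ν : R} (hx : T x = ν • x) {i : ι} (hi : μ i ≠ ν) : b.repr x i = 0 := by
  have h := b.repr_apply_eq_mul_of_apply_eq_smul hT x i
  rw [hx, map_smul, Finsupp.smul_apply, smul_eq_mul] at h
  have : (μ i - ν) * b.repr x i = 0 := by linear_combination -h
  exact (mul_eq_zero.1 this).resolve_left (sub_ne_zero.2 hi)

end Module.Basis

theorem Module.Basis.mem_range_of_apply_eq_smul {ι K V : Type*} [Field K] [AddCommGroup V]
    [Module K V] (b : Basis ι K V) {T : V →ₗ[K] V} {μ : ι → K}
    (hT : ∀ i, T (b i) = μ i • b i) {x : V} (hx : ∀ i, μ i = 0 → b.repr x i = 0) :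
    x ∈ LinearMap.range T := by
  have hspan : Submodule.span K (b '' {i | μ i ≠ 0}) ≤ LinearMap.range T := by
    rw [Submodule.span_le]
    rintro _ ⟨i, hi, rfl⟩
    exact ⟨(μ i)⁻¹ • b i, by rw [map_smul, hT, smul_smul, inv_mul_cancel₀ hi, one_smul]⟩
  exact hspan (b.mem_span_image.2 fun i hi h0 => Finsupp.mem_support_iff.1 hi (hx i h0))

theorem LinearMap.exists_comp_eq_of_forall_mem_range {K V₁ V₂ V₃ : Type*} [Field K]
    [AddCommGroup V₁] [Module K V₁] [AddCommGroup V₂] [Module K V₂] [AddCommGroup V₃] [Module K V₃]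
    (T : V₁ →ₗ[K] V₂) (f : V₃ →ₗ[K] V₂) (hf : ∀ x, f x ∈ range T) :
    ∃ g : V₃ →ₗ[K] V₁, T ∘ₗ g = f := by
  obtain ⟨g, hg⟩ := Module.projective_lifting_property T.rangeRestrict (f.codRestrict _ hf)
    T.surjective_rangeRestrict
  exact ⟨g, by ext x; simpa using congr_arg Subtype.val (LinearMap.congr_fun hg x)⟩

theorem eq_mul_of_forall_apply_add_eq_add {R : Type*} [CommRing R] {c q : ℤ → R}
    (h : ∀ m n : ℤ, n ≠ 0 → q (m + n) = c m + q n) (n : ℤ) : c n = n * c 1 := by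
  have hadd : ∀ a b, c (a + b) = c a + c b := by
    intro a b
    have hk : |b| + 1 ≠ 0 := by positivity
    have hbk : b + (|b| + 1) ≠ 0 := by linarith [neg_abs_le b]
    have h₁ := h (a + b) _ hk
    rw [add_assoc] at h₁
    linear_combination h a _ hbk + h b _ hk - h₁
  simpa [zsmul_eq_mul] using map_zsmul (AddMonoidHom.mk' c hadd) n 1

section FunctionalEquations

variable {K : Type*} [Field K] [CharZero K]

theorem eq_zero_of_forall_neg_mul_apply_add {p : ℤ → K}
    (hp : ∀ m n : ℤ, -(n : K) * p (m + n) = (m - n) * p n) (n : ℤ) : p n = 0 := by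
  have hp2 : p 2 = 0 := by simpa using hp 1 1
  have hhalf : ∀ n : ℤ, n ≠ 0 → p 0 = 2 * p n := by
    intro n hn
    have h := hp (-n) n
    rw [neg_add_cancel] at h
    push_cast at h
    exact mul_left_cancel₀ (neg_ne_zero.2 (Int.cast_ne_zero.2 hn)) (by linear_combination h)
  have hp0 : p 0 = 0 := by rw [hhalf 2 two_ne_zero, hp2, mul_zero]
  rcases eq_or_ne n 0 with rfl | hn
  · exact hp0
  · linear_combination (hp0 - hhalf n hn) / 2

theorem eq_add_mul_of_forall_sub_mul_apply_add {d : ℤ → K}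
    (hd : ∀ m n : ℤ, ((m : K) - n) * d (m + n) = m * d m - n * d n) (m : ℤ) :
    d m = d 0 + m * (d 1 - d 0) := by
  -- `e` is `d` minus the affine function agreeing with it at 0 and 1; affine functions solve `hd`.
  set e : ℤ → K := fun m => d m - d 0 - m * (d 1 - d 0) with he
  have he_eq : ∀ m n : ℤ, ((m : K) - n) * e (m + n) = m * e m - n * e n := by
    intro m n
    simp only [he]
    push_cast
    linear_combination hd m n
  have he0 : e 0 = 0 := by simp [he]
  have he1 : e 1 = 0 := by simp [he]
  have he_neg : ∀ m : ℤ, e (-m) = -e m := by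
    intro m
    rcases eq_or_ne m 0 with rfl | hm
    · simp [he0]
    have h := he_eq m (-m)
    rw [add_neg_cancel, he0] at h
    push_cast at h
    have : (m : K) * (e (-m) + e m) = 0 := by linear_combination -h
    linear_combination (mul_eq_zero.1 this).resolve_left (Int.cast_ne_zero.2 hm)
  have he2 : e 2 = 0 := by
    have h₁ := he_eq 2 1
    have h₂ := he_eq (-1) 3
    norm_num [he1, he_neg 1] at h₁ h₂
    linear_combination -(3 / 2) * h₁ - h₂ / 2
  have he_ge_two : ∀ k : ℕ, 2 ≤ k → e k = 0 := by
    intro k hk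
    induction k, hk using Nat.le_induction with
    | base => exact_mod_cast he2
    | succ k hk ih =>
      have h := he_eq k 1
      rw [ih, he1] at h
      have hk1 : (k : K) - 1 ≠ 0 := by
        rw [sub_ne_zero]; exact_mod_cast (by omega : k ≠ 1)
      push_cast at h ⊢
      exact (mul_eq_zero.1 (by linear_combination h)).resolve_left hk1
  have he_nat : ∀ k : ℕ, e k = 0 := by
    intro k
    rcases (by omega : k = 0 ∨ k = 1 ∨ 2 ≤ k) with rfl | rfl | hk
    exacts [he0, he1, he_ge_two k hk]
  obtain ⟨k, rfl | rfl⟩ := Int.eq_nat_or_neg m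
  · linear_combination he_nat k
  · linear_combination he_neg k - he_nat k

end FunctionalEquations

structure IsW00Basis {W : Type*} [LieRing W] [LieAlgebra ℂ W] (b : Module.Basis (ℤ ⊕ ℤ) ℂ W)
    (L I : ℤ → W) : Prop where
  L_eq : ∀ n : ℤ, L n = b (Sum.inl n)
  I_eq : ∀ n : ℤ, I n = b (Sum.inr n)
  lie_L_L : ∀ m n : ℤ, ⁅L m, L n⁆ = ((m : ℂ) - (n : ℂ)) • L (m + n)
  lie_L_I : ∀ m n : ℤ, ⁅L m, I n⁆ = (-(n : ℂ)) • I (m + n)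
  lie_I_I : ∀ m n : ℤ, ⁅I m, I n⁆ = 0

namespace IsW00Basis

open LieAlgebra LinearMap

variable {W : Type*} [LieRing W] [LieAlgebra ℂ W] {b : Module.Basis (ℤ ⊕ ℤ) ℂ W} {L I : ℤ → W}
  (hW : IsW00Basis b L I)
include hW

theorem lie_I_L (m n : ℤ) : ⁅I m, L n⁆ = (m : ℂ) • I (m + n) := by
  rw [← lie_skew, hW.lie_L_I, add_comm, neg_smul, neg_neg]

theorem lie_I_zero (x : W) : ⁅I 0, x⁆ = 0 := by
  suffices ad ℂ W (I 0) = 0 from LinearMap.congr_fun this x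
  refine b.ext fun i => ?_
  rcases i with n | n
  · simp [← hW.L_eq, hW.lie_I_L]
  · simp [← hW.I_eq, hW.lie_I_I]

theorem repr_L (n : ℤ) : b.repr (L n) = Finsupp.single (Sum.inl n) 1 := by
  rw [hW.L_eq, b.repr_self]

theorem repr_I (n : ℤ) : b.repr (I n) = Finsupp.single (Sum.inr n) 1 := by
  rw [hW.I_eq, b.repr_self]

theorem smul_L_add_smul_I_inj {n : ℤ} {a c a' c' : ℂ}
    (h : a • L n + c • I n = a' • L n + c' • I n) : a = a' ∧ c = c' := by
  constructor
  · simpa [hW.repr_L, hW.repr_I] using congr_arg (fun v => b.repr v (Sum.inl n)) h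
  · simpa [hW.repr_L, hW.repr_I] using congr_arg (fun v => b.repr v (Sum.inr n)) h

theorem ad_L_zero_apply_basis (i : ℤ ⊕ ℤ) :
    ad ℂ W (L 0) (b i) = (-(Sum.elim id id i : ℤ) : ℂ) • b i := by
  rcases i with n | n
  · simp [← hW.L_eq, hW.lie_L_L]
  · simp [← hW.I_eq, hW.lie_L_I]

theorem repr_lie_L_zero (x : W) (i : ℤ ⊕ ℤ) :
    b.repr ⁅L 0, x⁆ i = -(Sum.elim id id i : ℤ) * b.repr x i :=
  b.repr_apply_eq_mul_of_apply_eq_smul hW.ad_L_zero_apply_basis x i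

theorem exists_eq_smul_L_add_smul_I {n : ℤ} {v : W} (hv : ⁅L 0, v⁆ = (-(n : ℂ)) • v) :
    ∃ a c : ℂ, v = a • L n + c • I n := by
  have hzero : ∀ i, Sum.elim id id i ≠ n → b.repr v i = 0 := fun i hi =>
    b.repr_eq_zero_of_apply_eq_smul hW.ad_L_zero_apply_basis hv (by simpa using hi)
  refine ⟨b.repr v (Sum.inl n), b.repr v (Sum.inr n), b.ext_elem fun i => ?_⟩
  rcases i with m | m <;> rcases eq_or_ne m n with rfl | hmn <;>
    simp_all [hW.repr_L, hW.repr_I]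

theorem exists_lie_L_zero_eq (w : W) :
    ∃ u : W, ⁅u, L 0⁆ = w - b.repr w (Sum.inl 0) • L 0 - b.repr w (Sum.inr 0) • I 0 := by
  obtain ⟨u, hu⟩ := b.mem_range_of_apply_eq_smul hW.ad_L_zero_apply_basis
    (x := w - b.repr w (Sum.inl 0) • L 0 - b.repr w (Sum.inr 0) • I 0) fun i hi => by
      rcases i with n | n <;>
        simp only [Sum.elim_inl, Sum.elim_inr, id_eq, neg_eq_zero, Int.cast_eq_zero] at hi <;>
        subst hi <;> simp [hW.repr_L, hW.repr_I]
  exact ⟨-u, by rw [neg_lie, ← lie_skew, neg_neg, ← hu, ad_apply]⟩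

section Derivation

variable {E : Module.End ℂ W} (hE : ∀ x y : W, E ⁅x, y⁆ = ⁅E x, y⁆ + ⁅x, E y⁆)
include hE

theorem lie_L_zero_apply_of_derivation {α β : ℂ} (h0 : E (L 0) = α • L 0 + β • I 0) {n : ℤ}
    {v : W} (hv : ⁅L 0, v⁆ = (-(n : ℂ)) • v) : ⁅L 0, E v⁆ = (-(n : ℂ)) • E v + (n * α) • v := by
  have h := hE (L 0) v
  rw [hv, map_smul, h0, add_lie, smul_lie, smul_lie, hW.lie_I_zero, hv] at h
  linear_combination (norm := module) -h

theorem eq_zero_of_derivation_apply_L_zero {α β : ℂ} (h0 : E (L 0) = α • L 0 + β • I 0) :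
    α = 0 := by
  have h := hW.lie_L_zero_apply_of_derivation hE h0 (n := 1) (v := L 1) (by simp [hW.lie_L_L])
  simpa [hW.repr_lie_L_zero, hW.repr_L] using congr_arg (fun v => b.repr v (Sum.inl 1)) h

theorem coeff_relations_of_derivation {c d p q : ℤ → ℂ}
    (hEL : ∀ n, E (L n) = c n • L n + d n • I n) (hEI : ∀ n, E (I n) = p n • L n + q n • I n)
    (m n : ℤ) :
    ((m : ℂ) - n) * d (m + n) = m * d m - n * d n ∧
      -(n : ℂ) * p (m + n) = (m - n) * p n ∧ -(n : ℂ) * q (m + n) = -n * (c m + q n) := by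
  have hLL := hE (L m) (L n)
  have hLI := hE (L m) (I n)
  simp only [hW.lie_L_L, hW.lie_L_I, hW.lie_I_L, hW.lie_I_I, hEL, hEI, map_smul, add_lie,
    lie_add, smul_lie, lie_smul, smul_zero, add_zero] at hLL hLI
  obtain ⟨-, hd⟩ := hW.smul_L_add_smul_I_inj
    (a := (m - n) * c (m + n)) (a' := (m - n) * (c m + c n))
    (c := (m - n) * d (m + n)) (c' := m * d m - n * d n)
    (by linear_combination (norm := module) hLL)
  obtain ⟨hp, hq⟩ := hW.smul_L_add_smul_I_inj
    (a := -n * p (m + n)) (a' := (m - n) * p n)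
    (c := -n * q (m + n)) (c' := -n * (c m + q n))
    (by linear_combination (norm := module) hLI)
  exact ⟨hd, hp, hq⟩

end Derivation

variable {D₁ D₂ D₃ : Module.End ℂ W}
  (hD₁ : ∀ m : ℤ, D₁ (L m) = 0 ∧ D₁ (I m) = I m)
  (hD₂ : ∀ m : ℤ, D₂ (L m) = ((m : ℂ) - 1) • I m ∧ D₂ (I m) = 0)
  (hD₃ : ∀ m : ℤ, D₃ (L m) = (m : ℂ) • I m ∧ D₃ (I m) = 0)
include hD₁ hD₂ hD₃

theorem exists_eq_add_ad_of_apply_L_zero {E : Module.End ℂ W}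
    (hE : ∀ x y : W, E ⁅x, y⁆ = ⁅E x, y⁆ + ⁅x, E y⁆) {α β : ℂ}
    (h0 : E (L 0) = α • L 0 + β • I 0) :
    ∃ (r₁ r₂ r₃ : ℂ) (u : W), E = r₁ • D₁ + r₂ • D₂ + r₃ • D₃ + ad ℂ W u := by
  obtain rfl := hW.eq_zero_of_derivation_apply_L_zero hE h0
  have hweight : ∀ (n : ℤ) (v : W), ⁅L 0, v⁆ = (-(n : ℂ)) • v → ⁅L 0, E v⁆ = (-(n : ℂ)) • E v :=
    fun n v hv => by simpa using hW.lie_L_zero_apply_of_derivation hE h0 hv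
  choose c d hEL using fun n =>
    hW.exists_eq_smul_L_add_smul_I (hweight n (L n) (by simp [hW.lie_L_L]))
  choose p q hEI using fun n =>
    hW.exists_eq_smul_L_add_smul_I (hweight n (I n) (by simp [hW.lie_L_I]))
  have hrel := hW.coeff_relations_of_derivation hE hEL hEI
  have hp := eq_zero_of_forall_neg_mul_apply_add fun m n => (hrel m n).2.1
  have hq_add : ∀ m n : ℤ, n ≠ 0 → q (m + n) = c m + q n := fun m n hn =>
    mul_left_cancel₀ (neg_ne_zero.2 (Int.cast_ne_zero.2 hn)) (hrel m n).2.2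
  have hc := eq_mul_of_forall_apply_add_eq_add hq_add
  have hq : ∀ n : ℤ, q n = q 1 + (n - 1) * c 1 := fun n => by
    rw [← sub_add_cancel n 1, hq_add _ _ one_ne_zero, hc]
    push_cast
    ring
  have hd := eq_add_mul_of_forall_sub_mul_apply_add fun m n => (hrel m n).1
  refine ⟨q 1 - c 1, -d 0, d 1, -c 1 • L 0, b.ext ?_⟩
  rintro (n | n)
  · rw [← hW.L_eq, hEL, hc, hd]
    simp only [LinearMap.add_apply, LinearMap.smul_apply, ad_apply, smul_lie, hW.lie_L_L,
      zero_add, Int.cast_zero, hD₁, hD₂, hD₃]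
    module
  · rw [← hW.I_eq, hEI, hp, hq]
    simp only [LinearMap.add_apply, LinearMap.smul_apply, ad_apply, smul_lie, hW.lie_L_I,
      zero_add, hD₁, hD₂, hD₃]
    module

theorem exists_eq_add_ad {D : Module.End ℂ W}
    (hD : ∀ x y : W, D ⁅x, y⁆ = ⁅D x, y⁆ + ⁅x, D y⁆) :
    ∃ (r₁ r₂ r₃ : ℂ) (u : W), D = r₁ • D₁ + r₂ • D₂ + r₃ • D₃ + ad ℂ W u := by
  obtain ⟨u₀, hu₀⟩ := hW.exists_lie_L_zero_eq (D (L 0))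
  have hE : ∀ x y : W,
      (D - ad ℂ W u₀) ⁅x, y⁆ = ⁅(D - ad ℂ W u₀) x, y⁆ + ⁅x, (D - ad ℂ W u₀) y⁆ := by
    intro x y
    simp only [LinearMap.sub_apply, ad_apply, hD, leibniz_lie u₀ x y, sub_lie, lie_sub]
    abel
  obtain ⟨r₁, r₂, r₃, u, hu⟩ := hW.exists_eq_add_ad_of_apply_L_zero hD₁ hD₂ hD₃ hE
    (α := b.repr (D (L 0)) (Sum.inl 0)) (β := b.repr (D (L 0)) (Sum.inr 0))
    (by rw [LinearMap.sub_apply, ad_apply, hu₀]; abel)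
  exact ⟨r₁, r₂, r₃, u + u₀, by rw [map_add, ← add_assoc, ← hu, sub_add_cancel]⟩

theorem exists_linearMap_eq_add_lie {V : Type*} [AddCommGroup V] [Module ℂ V]
    (F : V →ₗ[ℂ] Module.End ℂ W)
    (hF : ∀ (x : V) (y z : W), F x ⁅y, z⁆ = ⁅F x y, z⁆ + ⁅y, F x z⁆) :
    ∃ (φ : V →ₗ[ℂ] W) (ρ₁ ρ₂ ρ₃ : V →ₗ[ℂ] ℂ), ∀ x y,
      F x y = ρ₁ x • D₁ y + ρ₂ x • D₂ y + ρ₃ x • D₃ y + ⁅φ x, y⁆ := by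
  let T : ℂ × ℂ × ℂ × W →ₗ[ℂ] Module.End ℂ W :=
    (toSpanSingleton ℂ _ D₁).coprod <| (toSpanSingleton ℂ _ D₂).coprod <|
      (toSpanSingleton ℂ _ D₃).coprod (ad ℂ W : W →ₗ[ℂ] Module.End ℂ W)
  obtain ⟨g, hg⟩ := T.exists_comp_eq_of_forall_mem_range F fun x => by
    obtain ⟨r₁, r₂, r₃, u, hu⟩ := hW.exists_eq_add_ad hD₁ hD₂ hD₃ (hF x)
    exact ⟨(r₁, r₂, r₃, u), by simp [T, hu, add_assoc]⟩
  refine ⟨snd _ _ _ ∘ₗ snd _ _ _ ∘ₗ snd _ _ _ ∘ₗ g, fst _ _ _ ∘ₗ g, fst _ _ _ ∘ₗ snd _ _ _ ∘ₗ g,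
    fst _ _ _ ∘ₗ snd _ _ _ ∘ₗ snd _ _ _ ∘ₗ g, fun x y => ?_⟩
  rw [← hg]
  simp [T, add_assoc]

end IsW00Basis

/-- Lemma 3.4: every biderivation `f` of `W(0,0)` may be written in the two forms
`f(x,y) = ρ₁(x)D₁(y) + ρ₂(x)D₂(y) + ρ₃(x)D₃(y) + [φ(x), y]`
and `f(x,y) = θ₁(y)D₁(x) + θ₂(y)D₂(x) + θ₃(y)D₃(x) + [x, ψ(y)]`. -/
theorem stmt6 {W : Type*} [LieRing W] [LieAlgebra ℂ W]
    (b : Module.Basis (ℤ ⊕ ℤ) ℂ W) (L I : ℤ → W)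
    (hL : ∀ n : ℤ, L n = b (Sum.inl n))
    (hI : ∀ n : ℤ, I n = b (Sum.inr n))
    (hLL : ∀ m n : ℤ, ⁅L m, L n⁆ = ((m : ℂ) - (n : ℂ)) • L (m + n))
    (hLI : ∀ m n : ℤ, ⁅L m, I n⁆ = (-(n : ℂ)) • I (m + n))
    (hII : ∀ m n : ℤ, ⁅I m, I n⁆ = 0)
    (D₁ D₂ D₃ : W →ₗ[ℂ] W)
    (hD₁ : ∀ m : ℤ, D₁ (L m) = 0 ∧ D₁ (I m) = I m)
    (hD₂ : ∀ m : ℤ, D₂ (L m) = ((m : ℂ) - 1) • I m ∧ D₂ (I m) = 0)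
    (hD₃ : ∀ m : ℤ, D₃ (L m) = (m : ℂ) • I m ∧ D₃ (I m) = 0)
    (f : W →ₗ[ℂ] W →ₗ[ℂ] W)
    (hf1 : ∀ x y z : W, f ⁅x, y⁆ z = ⁅x, f y z⁆ + ⁅f x z, y⁆)
    (hf2 : ∀ x y z : W, f x ⁅y, z⁆ = ⁅f x y, z⁆ + ⁅y, f x z⁆) :
    ∃ (φ ψ : W →ₗ[ℂ] W) (ρ₁ ρ₂ ρ₃ θ₁ θ₂ θ₃ : W →ₗ[ℂ] ℂ), ∀ x y : W,
      f x y = ρ₁ x • D₁ y + ρ₂ x • D₂ y + ρ₃ x • D₃ y + ⁅φ x, y⁆ ∧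
      f x y = θ₁ y • D₁ x + θ₂ y • D₂ x + θ₃ y • D₃ x + ⁅x, ψ y⁆ := by
  have hW : IsW00Basis b L I := ⟨hL, hI, hLL, hLI, hII⟩
  obtain ⟨φ, ρ₁, ρ₂, ρ₃, hφ⟩ := hW.exists_linearMap_eq_add_lie hD₁ hD₂ hD₃ f hf2
  obtain ⟨ψ, θ₁, θ₂, θ₃, hψ⟩ := hW.exists_linearMap_eq_add_lie hD₁ hD₂ hD₃ f.flip
    fun y x z => by simp only [LinearMap.flip_apply, hf1, add_comm]
  refine ⟨φ, -ψ, ρ₁, ρ₂, ρ₃, θ₁, θ₂, θ₃, fun x y => ⟨hφ x y, ?_⟩⟩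
  rw [← f.flip_apply, hψ, LinearMap.neg_apply, lie_neg, ← lie_skew]
end

section
/- Let f be a biderivation of the Lie algebra W(0,0). Then there exist λ ∈ ℂ and a finitely supported function μ : ℤ → ℂ such that for all m, n ∈ ℤ: f(L_m, L_n) = λ·(m − n)·L_{m+n} + Σ_{k∈ℤ} μ(k)·I_{m+n+k}, f(L_m, I_n) = −λ·n·I_{m+n}, f(I_n, L_m) = λ·n·I_{m+n}, and f(I_m, I_n) = 0; that is, f(x, y) = λ·[x, y] + r_μ(x, y) for all x, y ∈ W(0,0), where r_μ is the bilinear map with r_μ(L_m, L_n) = Σ_{k∈ℤ} μ(k)·I_{m+n+k} and r_μ(x, y) = 0 whenever x or y lies in the span of {I_n : n ∈ ℤ}. -/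
/-!
For fixed `x` and `z`, both `f(·, z)` and `f(x, ·)` are derivations of `W(0,0)`. In the basis
`L_n, I_n`, the Leibniz rule of a derivation `D` on the pairs `(L_p, L_q)` and `(L_p, I_q)`
becomes four linear recurrences for the coordinates of `D L_q` and `D I_q`; taking `p = 0`
expresses their off-diagonal coordinates through those of `D L_0`. Consequently every derivation
maps the ideal spanned by the `I_n` into itself, the `L`-part of `f(L_m, L_n)` is a biderivation
of the Witt algebra, hence equal to `λ (m - n) L_{m+n}`, and the `I`-part of `f(L_m, L_n)`
depends only on `m + n`, which produces `μ`. Finally `f = λ [·, ·]` as soon as one argument is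
some `I_n`; the case `f(I_m, L_n)` follows from `f(L_n, I_m)` applied to the biderivation
`(x, y) ↦ -f(y, x)`.
-/

open Module

theorem eq_zero_of_intCast_sub_mul_eq_zero {K : Type*} [Ring K] [NoZeroDivisors K] [CharZero K]
    {s t : ℤ} {x : K} (hst : s ≠ t) (h : ((s : K) - t) * x = 0) : x = 0 :=
  (mul_eq_zero.mp h).resolve_left (sub_ne_zero.mpr (Int.cast_injective.ne hst))

section Biderivation

variable {R L : Type*} [CommRing R] [LieRing L] [LieAlgebra R L]

structure IsBiderivation (f : L →ₗ[R] L →ₗ[R] L) : Prop where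
  map_lie_left (x y z : L) : f ⁅x, y⁆ z = ⁅x, f y z⁆ + ⁅f x z, y⁆
  map_lie_right (x y z : L) : f x ⁅y, z⁆ = ⁅f x y, z⁆ + ⁅y, f x z⁆

namespace IsBiderivation

variable {f : L →ₗ[R] L →ₗ[R] L}

def derivationLeft (hf : IsBiderivation f) (z : L) : LieDerivation R L L where
  toLinearMap := f.flip z
  leibniz' x y := by
    simp only [LinearMap.flip_apply, hf.map_lie_left, ← lie_skew (f x z)]
    abel

def derivationRight (hf : IsBiderivation f) (x : L) : LieDerivation R L L where
  toLinearMap := f x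
  leibniz' y z := by
    rw [hf.map_lie_right, ← lie_skew (f x y)]
    abel

@[simp]
theorem derivationRight_apply (hf : IsBiderivation f) (x y : L) :
    hf.derivationRight x y = f x y :=
  rfl

theorem neg_flip (hf : IsBiderivation f) : IsBiderivation (-f.flip) where
  map_lie_left x y z := by
    simp only [LinearMap.neg_apply, LinearMap.flip_apply, hf.map_lie_right, lie_neg, neg_lie]
    abel
  map_lie_right x y z := by
    simp only [LinearMap.neg_apply, LinearMap.flip_apply, hf.map_lie_left, lie_neg, neg_lie]
    abel

end IsBiderivation

end Biderivation

section W00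

variable {K W : Type*} [Field K] [LieRing W] [LieAlgebra K W]

/-- `b (.inl n)` is `L_n` and `b (.inr n)` is `I_n`. -/
structure IsW00Basis_s7 (b : Basis (ℤ ⊕ ℤ) K W) : Prop where
  lie_inl_inl (m n : ℤ) : ⁅b (.inl m), b (.inl n)⁆ = ((m : K) - n) • b (.inl (m + n))
  lie_inl_inr (m n : ℤ) : ⁅b (.inl m), b (.inr n)⁆ = (-(n : K)) • b (.inr (m + n))
  lie_inr_inr (m n : ℤ) : ⁅b (.inr m), b (.inr n)⁆ = 0

/-- The `λ` and `μ` of the theorem, read off from `f(L₁, L₀) = λ L₁ + ⋯` and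
`f(L₀, L₀) = ⋯ + ∑ₖ μ(k) I_k`. -/
noncomputable def lieCoeff (b : Basis (ℤ ⊕ ℤ) K W) (f : W →ₗ[K] W →ₗ[K] W) : K :=
  b.repr (f (b (.inl 1)) (b (.inl 0))) (.inl 1)

noncomputable def symmCoeff (b : Basis (ℤ ⊕ ℤ) K W) (f : W →ₗ[K] W →ₗ[K] W) : ℤ →₀ K :=
  (b.repr (f (b (.inl 0)) (b (.inl 0)))).comapDomain Sum.inr Sum.inr_injective.injOn

namespace IsW00Basis_s7

variable {b : Basis (ℤ ⊕ ℤ) K W}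

theorem lie_inr_inl (hb : IsW00Basis_s7 b) (m n : ℤ) :
    ⁅b (.inr m), b (.inl n)⁆ = (m : K) • b (.inr (n + m)) := by
  rw [← lie_skew, hb.lie_inl_inr, neg_smul, neg_neg]

theorem repr_lie_inl_inl (hb : IsW00Basis_s7 b) (m j : ℤ) (v : W) :
    b.repr ⁅b (.inl m), v⁆ (.inl j) = (2 * m - j) * b.repr v (.inl (j - m)) := by
  suffices (b.coord (.inl j)).comp (LieModule.toEnd K W W (b (.inl m))) =
      (2 * m - j : K) • b.coord (.inl (j - m)) from LinearMap.congr_fun this v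
  refine b.ext fun i => ?_
  rcases i with n | n <;> simp [hb.lie_inl_inl, hb.lie_inl_inr, Finsupp.single_apply]
  split_ifs <;> first | (exfalso; omega) | (subst j; push_cast; ring) | simp

theorem repr_lie_inl_inr (hb : IsW00Basis_s7 b) (m j : ℤ) (v : W) :
    b.repr ⁅b (.inl m), v⁆ (.inr j) = (m - j) * b.repr v (.inr (j - m)) := by
  suffices (b.coord (.inr j)).comp (LieModule.toEnd K W W (b (.inl m))) =
      (m - j : K) • b.coord (.inr (j - m)) from LinearMap.congr_fun this v
  refine b.ext fun i => ?_
  rcases i with n | n <;> simp [hb.lie_inl_inl, hb.lie_inl_inr, Finsupp.single_apply]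
  split_ifs <;> first | (exfalso; omega) | (subst j; push_cast; ring) | simp

theorem repr_lie_inr_inl (hb : IsW00Basis_s7 b) (m j : ℤ) (v : W) :
    b.repr ⁅b (.inr m), v⁆ (.inl j) = 0 := by
  suffices (b.coord (.inl j)).comp (LieModule.toEnd K W W (b (.inr m))) = 0 from
    LinearMap.congr_fun this v
  refine b.ext fun i => ?_
  rcases i with n | n <;> simp [hb.lie_inr_inl, hb.lie_inr_inr]

theorem repr_lie_inr_inr (hb : IsW00Basis_s7 b) (m j : ℤ) (v : W) :
    b.repr ⁅b (.inr m), v⁆ (.inr j) = m * b.repr v (.inl (j - m)) := by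
  suffices (b.coord (.inr j)).comp (LieModule.toEnd K W W (b (.inr m))) =
      (m : K) • b.coord (.inl (j - m)) from LinearMap.congr_fun this v
  refine b.ext fun i => ?_
  rcases i with n | n <;>
    simp [hb.lie_inr_inl, hb.lie_inr_inr, Finsupp.single_apply]
  split_ifs <;> first | (exfalso; omega) | (subst j; ring) | simp

theorem repr_inl_derivation_inl (hb : IsW00Basis_s7 b) (D : LieDerivation K W W) (p q j : ℤ) :
    (p - q) * b.repr (D (b (.inl (p + q)))) (.inl j) =
      (2 * p - j) * b.repr (D (b (.inl q))) (.inl (j - p)) -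
        (2 * q - j) * b.repr (D (b (.inl p))) (.inl (j - q)) := by
  have h := congr(b.repr $(D.apply_lie_eq_sub (b (.inl p)) (b (.inl q))) (.inl j))
  simpa [hb.lie_inl_inl, hb.repr_lie_inl_inl] using h

theorem repr_inr_derivation_inl (hb : IsW00Basis_s7 b) (D : LieDerivation K W W) (p q j : ℤ) :
    (p - q) * b.repr (D (b (.inl (p + q)))) (.inr j) =
      (p - j) * b.repr (D (b (.inl q))) (.inr (j - p)) -
        (q - j) * b.repr (D (b (.inl p))) (.inr (j - q)) := by
  have h := congr(b.repr $(D.apply_lie_eq_sub (b (.inl p)) (b (.inl q))) (.inr j))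
  simpa [hb.lie_inl_inl, hb.repr_lie_inl_inr] using h

theorem repr_inl_derivation_inr (hb : IsW00Basis_s7 b) (D : LieDerivation K W W) (p q j : ℤ) :
    -q * b.repr (D (b (.inr (p + q)))) (.inl j) =
      (2 * p - j) * b.repr (D (b (.inr q))) (.inl (j - p)) := by
  have h := congr(b.repr $(D.apply_lie_eq_sub (b (.inl p)) (b (.inr q))) (.inl j))
  simpa [hb.lie_inl_inr, hb.repr_lie_inl_inl, hb.repr_lie_inr_inl] using h

theorem repr_inr_derivation_inr (hb : IsW00Basis_s7 b) (D : LieDerivation K W W) (p q j : ℤ) :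
    -q * b.repr (D (b (.inr (p + q)))) (.inr j) =
      (p - j) * b.repr (D (b (.inr q))) (.inr (j - p)) -
        q * b.repr (D (b (.inl p))) (.inl (j - q)) := by
  have h := congr(b.repr $(D.apply_lie_eq_sub (b (.inl p)) (b (.inr q))) (.inr j))
  simpa [hb.lie_inl_inr, hb.repr_lie_inl_inr, hb.repr_lie_inr_inr] using h

theorem sub_mul_repr_inr_derivation_inr (hb : IsW00Basis_s7 b) (D : LieDerivation K W W)
    (q j : ℤ) : (j - q) * b.repr (D (b (.inr q))) (.inr j) =
      -q * b.repr (D (b (.inl 0))) (.inl (j - q)) := by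
  have key := hb.repr_inr_derivation_inr D 0 q j
  simp only [zero_add, sub_zero, Int.cast_zero, zero_sub] at key
  linear_combination key

theorem sub_mul_repr_inl_derivation_inl (hb : IsW00Basis_s7 b) (D : LieDerivation K W W)
    (q j : ℤ) : (j - q) * b.repr (D (b (.inl q))) (.inl j) =
      (j - 2 * q) * b.repr (D (b (.inl 0))) (.inl (j - q)) := by
  have key := hb.repr_inl_derivation_inl D 0 q j
  simp only [zero_add, sub_zero, Int.cast_zero, mul_zero, zero_sub] at key
  linear_combination key

variable [CharZero K]

theorem repr_inl_derivation_inr_eq_zero (hb : IsW00Basis_s7 b) (D : LieDerivation K W W)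
    (q j : ℤ) : b.repr (D (b (.inr q))) (.inl j) = 0 := by
  set X : ℤ → ℤ → K := fun q j => b.repr (D (b (.inr q))) (.inl j)
  have hrec : ∀ p q j : ℤ, -q * X (p + q) j = (2 * p - j) * X q (j - p) :=
    hb.repr_inl_derivation_inr D
  have off_diag : ∀ q j, j ≠ q → X q j = 0 := fun q j h => by
    have := hrec 0 q j
    simp only [zero_add, sub_zero, Int.cast_zero, mul_zero, zero_sub] at this
    exact eq_zero_of_intCast_sub_mul_eq_zero h (by linear_combination this)
  have diag : ∀ p q, -q * X (p + q) (p + q) = (p - q) * X q q := fun p q => by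
    simpa [show p + q - p = q by ring, two_mul, add_sub_add_left_eq_sub] using hrec p q (p + q)
  have h2 : X 2 2 = 0 := by simpa using diag 1 1
  have h1 : X 1 1 = 0 := by
    have := diag (-1) 2
    norm_num [h2] at this
    exact this
  rcases eq_or_ne j q with rfl | h
  · have := diag (j - 1) 1
    simp [h1] at this
    exact this
  · exact off_diag q j h

theorem repr_inr_derivation_inl_of_ne (hb : IsW00Basis_s7 b) (D : LieDerivation K W W) {q j : ℤ}
    (h : j ≠ q) : b.repr (D (b (.inl q))) (.inr j) = b.repr (D (b (.inl 0))) (.inr (j - q)) := by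
  have key := hb.repr_inr_derivation_inl D 0 q j
  simp only [zero_add, sub_zero, Int.cast_zero, zero_sub] at key
  exact sub_eq_zero.mp (eq_zero_of_intCast_sub_mul_eq_zero h (by linear_combination key))

theorem derivation_inr_eq_smul (hb : IsW00Basis_s7 b) (D : LieDerivation K W W)
    (hD : ∀ p k, b.repr (D (b (.inl p))) (.inl k) = 0) (q : ℤ) :
    D (b (.inr q)) = b.repr (D (b (.inr 1))) (.inr 1) • b (.inr q) := by
  set X : ℤ → ℤ → K := fun q j => b.repr (D (b (.inr q))) (.inr j)
  have key : ∀ p q j : ℤ, -q * X (p + q) j = (p - j) * X q (j - p) := fun p q j => by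
    simpa [hD] using hb.repr_inr_derivation_inr D p q j
  have off_diag : ∀ q j, j ≠ q → X q j = 0 := fun q j h => by
    have := key 0 q j
    simp only [zero_add, sub_zero, Int.cast_zero, zero_sub] at this
    exact eq_zero_of_intCast_sub_mul_eq_zero h (by linear_combination this)
  have diag : X q q = X 1 1 := by
    have := key (q - 1) 1 q
    simp at this
    exact this
  rw [b.ext_elem_iff]
  rintro (j | j)
  · simp [hb.repr_inl_derivation_inr_eq_zero]
  · rcases eq_or_ne j q with rfl | h
    · simpa using diag
    · simpa [Finsupp.single_apply, h] using off_diag q j h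

section Biderivation

variable {f : W →ₗ[K] W →ₗ[K] W}

theorem repr_inl_apply_inl_inl_of_ne (hb : IsW00Basis_s7 b) (hf : IsBiderivation f) {m n j : ℤ}
    (h : j ≠ m + n) : b.repr (f (b (.inl m)) (b (.inl n))) (.inl j) = 0 := by
  set a : ℤ → ℤ → ℤ → K := fun m n j => b.repr (f (b (.inl m)) (b (.inl n))) (.inl j)
  have right : ∀ m q j : ℤ, (j - q) * a m q j = (j - 2 * q) * a m 0 (j - q) := fun m =>
    hb.sub_mul_repr_inl_derivation_inl (hf.derivationRight (b (.inl m)))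
  have left : ∀ q r j : ℤ, (j - q) * a q r j = (j - 2 * q) * a 0 r (j - q) := fun q r =>
    hb.sub_mul_repr_inl_derivation_inl (hf.derivationLeft (b (.inl r))) q
  have witt : ∀ p q r j : ℤ, (p - q) * a (p + q) r j =
      (2 * p - j) * a q r (j - p) - (2 * q - j) * a p r (j - q) := fun p q r =>
    hb.repr_inl_derivation_inl (hf.derivationLeft (b (.inl r))) p q
  have h_m00 : ∀ m, a m 0 0 = 0 := fun m => by
    have := right m 1 1
    norm_num at this
    exact this
  have h_00t : ∀ t, a 0 0 t = 0 := fun t => by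
    rcases eq_or_ne t 0 with rfl | ht
    · exact h_m00 0
    have := left (-t) 0 0
    simp only [h_m00, sub_neg_eq_add, zero_add, mul_zero] at this
    refine eq_zero_of_intCast_sub_mul_eq_zero (s := t) (t := -t) (by omega) ?_
    push_cast at this ⊢
    linear_combination -this
  have h_q0 : ∀ q j, j ≠ q → a q 0 j = 0 := fun q j hj =>
    eq_zero_of_intCast_sub_mul_eq_zero hj (by simpa [h_00t] using left q 0 j)
  have h_0q : ∀ q j, j ≠ q → a 0 q j = 0 := fun q j hj =>
    eq_zero_of_intCast_sub_mul_eq_zero hj (by simpa [h_00t] using right 0 q j)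
  have h_diag_left : ∀ q r, r ≠ 0 → r ≠ q → a q r q = 0 := fun q r hr hrq =>
    eq_zero_of_intCast_sub_mul_eq_zero hrq.symm
      (by simpa [h_q0 q (q - r) (by omega)] using right q r q)
  have h_diag : ∀ q, q ≠ 0 → a q q q = 0 := fun q hq => by
    have := witt (2 * q) (-q) q q
    rw [show 2 * q + -q = q by ring, show q - 2 * q = -q by ring, show q - -q = 2 * q by ring,
      h_diag_left (-q) q hq (by omega), h_diag_left (2 * q) q hq (by omega)] at this
    exact eq_zero_of_intCast_sub_mul_eq_zero (s := 2 * q) (t := -q) (by omega)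
      (by linear_combination this)
  by_cases hjm : j = m
  · subst hjm
    by_cases hnj : n = j
    · exact hnj ▸ h_diag n (by omega)
    · exact h_diag_left j n (by omega) hnj
  · exact eq_zero_of_intCast_sub_mul_eq_zero hjm
      (by simpa [h_0q n (j - m) (by omega)] using left m n j)

theorem repr_inl_apply_inl_inl_add (hb : IsW00Basis_s7 b) (hf : IsBiderivation f) (m n : ℤ) :
    b.repr (f (b (.inl m)) (b (.inl n))) (.inl (m + n)) = lieCoeff b f * (m - n) := by
  set a : ℤ → ℤ → ℤ → K := fun m n j => b.repr (f (b (.inl m)) (b (.inl n))) (.inl j)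
  have right : ∀ m n : ℤ, m * a m n (m + n) = (m - n) * a m 0 m := fun m n => by
    have : (((m + n : ℤ) : K) - n) * a m n (m + n) = ((m + n : ℤ) - 2 * n) * a m 0 (m + n - n) :=
      hb.sub_mul_repr_inl_derivation_inl (hf.derivationRight (b (.inl m))) n (m + n)
    rw [add_sub_cancel_right] at this
    push_cast at this
    linear_combination this
  have left : ∀ m n : ℤ, n * a m n (m + n) = (n - m) * a 0 n n := fun m n => by
    have : (((m + n : ℤ) : K) - m) * a m n (m + n) = ((m + n : ℤ) - 2 * m) * a 0 n (m + n - m) :=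
      hb.sub_mul_repr_inl_derivation_inl (hf.derivationLeft (b (.inl n))) m (m + n)
    rw [add_sub_cancel_left] at this
    push_cast at this
    linear_combination this
  have cross : ∀ m n : ℤ, m ≠ n → n * a m 0 m + m * a 0 n n = 0 := fun m n hmn =>
    eq_zero_of_intCast_sub_mul_eq_zero hmn (by linear_combination -n * right m n + m * left m n)
  show a m n (m + n) = a 1 0 1 * (m - n)
  -- `cross` is applied with an auxiliary index (`m ^ 2 + 2`, `n ^ 2 + 1`) avoiding the
  -- finitely many excluded values.
  have h_right0 : ∀ m, a m 0 m = a 1 0 1 * m := fun m => by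
    have hN : m ^ 2 + 2 ≠ 0 ∧ m ≠ m ^ 2 + 2 ∧ (1 : ℤ) ≠ m ^ 2 + 2 := by
      refine ⟨by positivity, ?_, ?_⟩ <;> nlinarith
    have h : ((m ^ 2 + 2 : ℤ) : K) * (a m 0 m - a 1 0 1 * m) = 0 := by
      linear_combination cross m _ hN.2.1 - m * cross 1 _ hN.2.2
    exact sub_eq_zero.mp ((mul_eq_zero.mp h).resolve_left (mod_cast hN.1))
  have h_left0 : ∀ n, a 0 n n = -(a 1 0 1 * n) := fun n => by
    have hM : n ^ 2 + 1 ≠ 0 ∧ n ^ 2 + 1 ≠ n := ⟨by positivity, by nlinarith⟩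
    have h : ((n ^ 2 + 1 : ℤ) : K) * (a 0 n n + a 1 0 1 * n) = 0 := by
      linear_combination cross _ n hM.2 - n * h_right0 (n ^ 2 + 1)
    exact eq_neg_of_add_eq_zero_left ((mul_eq_zero.mp h).resolve_left (mod_cast hM.1))
  rcases eq_or_ne m 0 with rfl | hm
  · rw [zero_add, h_left0]
    push_cast
    ring
  · refine mul_left_cancel₀ (Int.cast_ne_zero.mpr hm) ?_
    linear_combination right m n + (m - n) * h_right0 m

theorem repr_inl_apply_inl_inl (hb : IsW00Basis_s7 b) (hf : IsBiderivation f) (m n j : ℤ) :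
    b.repr (f (b (.inl m)) (b (.inl n))) (.inl j) =
      if j = m + n then lieCoeff b f * (m - n) else 0 := by
  split_ifs with h
  · exact h ▸ hb.repr_inl_apply_inl_inl_add hf m n
  · exact hb.repr_inl_apply_inl_inl_of_ne hf h

theorem repr_inr_apply_inl_inl_add (hb : IsW00Basis_s7 b) (hf : IsBiderivation f) (m n : ℤ) :
    b.repr (f (b (.inl m)) (b (.inl n))) (.inr (m + n)) =
      b.repr (f (b (.inl 0)) (b (.inl 0))) (.inr 0) := by
  set β : ℤ → ℤ → ℤ → K := fun m n j => b.repr (f (b (.inl m)) (b (.inl n))) (.inr j)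
  have shift_right : ∀ m q j, j ≠ q → β m q j = β m 0 (j - q) := fun m _ _ h =>
    hb.repr_inr_derivation_inl_of_ne (hf.derivationRight (b (.inl m))) h
  have shift_left : ∀ q r j, j ≠ q → β q r j = β 0 r (j - q) := fun _ r _ h =>
    hb.repr_inr_derivation_inl_of_ne (hf.derivationLeft (b (.inl r))) h
  have h_right0 : ∀ m, m ≠ 0 → β m 0 m = β 0 1 1 := fun m hm => by
    have := shift_right m 1 (m + 1) (by omega)
    rw [add_sub_cancel_right] at this
    rw [← this, shift_left m 1 (m + 1) (by omega), add_sub_cancel_left]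
  have h_left0 : ∀ n, n ≠ 0 → β 0 n n = β 0 1 1 := fun n hn => by
    have := shift_left 1 n (1 + n) (by omega)
    rw [add_sub_cancel_left] at this
    rw [← this, shift_right 1 n (1 + n) (by omega), add_sub_cancel_right, h_right0 1 one_ne_zero]
  have witt : ∀ p q j : ℤ, (p - q) * β 0 (p + q) j =
      (p - j) * β 0 q (j - p) - (q - j) * β 0 p (j - q) :=
    hb.repr_inr_derivation_inl (hf.derivationRight (b (.inl 0)))
  have h_zero : β 0 0 0 = β 0 1 1 := by
    have := witt 1 (-1) 0
    norm_num [h_left0 (-1)] at this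
    linear_combination this / 2
  show β m n (m + n) = β 0 0 0
  rcases eq_or_ne m 0 with rfl | hm
  · rcases eq_or_ne n 0 with rfl | hn
    · rfl
    · rw [zero_add, h_left0 n hn, h_zero]
  · rw [shift_right m n (m + n) (by omega), add_sub_cancel_right, h_right0 m hm, h_zero]

theorem repr_inr_apply_inl_inl (hb : IsW00Basis_s7 b) (hf : IsBiderivation f) (m n j : ℤ) :
    b.repr (f (b (.inl m)) (b (.inl n))) (.inr j) =
      b.repr (f (b (.inl 0)) (b (.inl 0))) (.inr (j - m - n)) := by
  set β : ℤ → ℤ → ℤ → K := fun m n j => b.repr (f (b (.inl m)) (b (.inl n))) (.inr j)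
  have shift_right : ∀ m q j, j ≠ q → β m q j = β m 0 (j - q) := fun m _ _ h =>
    hb.repr_inr_derivation_inl_of_ne (hf.derivationRight (b (.inl m))) h
  have shift_left : ∀ q r j, j ≠ q → β q r j = β 0 r (j - q) := fun _ r _ h =>
    hb.repr_inr_derivation_inl_of_ne (hf.derivationLeft (b (.inl r))) h
  have off_diag : ∀ m n j, j ≠ n → j ≠ m + n → β m n j = β 0 0 (j - m - n) :=
    fun m n j h1 h2 => by
      rw [shift_right m n j h1, shift_left m 0 (j - n) (by omega), sub_right_comm]
  have witt : ∀ p q r j : ℤ, (p - q) * β (p + q) r j =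
      (p - j) * β q r (j - p) - (q - j) * β p r (j - q) := fun p q r =>
    hb.repr_inr_derivation_inl (hf.derivationLeft (b (.inl r))) p q
  have diag_self : ∀ m, m ≠ 0 → β m m m = β 0 0 (-m) := fun m hm => by
    have := witt (2 * m) (-m) m m
    rw [show 2 * m + -m = m by ring, off_diag (-m) m _ (by omega) (by omega),
      off_diag (2 * m) m _ (by omega) (by omega), show m - 2 * m - -m - m = -m by ring,
      show m - -m - 2 * m - m = -m by ring] at this
    refine mul_left_cancel₀ (Int.cast_ne_zero.mpr (by omega : 3 * m ≠ 0)) ?_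
    push_cast at this ⊢
    linear_combination this
  show β m n j = β 0 0 (j - m - n)
  by_cases hj : j = m + n
  · rw [hj, sub_sub, sub_self]
    exact hb.repr_inr_apply_inl_inl_add hf m n
  by_cases hjn : j = n
  · subst hjn
    by_cases hjm : j = m
    · subst hjm
      rw [diag_self j (by omega)]
      ring_nf
    · rw [shift_left m j j hjm, shift_right 0 j (j - m) (by omega)]
  · exact off_diag m n j hjn hj

theorem apply_inl_inl (hb : IsW00Basis_s7 b) (hf : IsBiderivation f) (m n : ℤ) :
    f (b (.inl m)) (b (.inl n)) = (lieCoeff b f * (m - n)) • b (.inl (m + n)) +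
      (symmCoeff b f).sum fun k c => c • b (.inr (m + n + k)) := by
  rw [b.ext_elem_iff]
  rintro (j | j) <;>
    simp only [map_add, map_finsuppSum, map_smul, Basis.repr_self, Finsupp.add_apply,
      Finsupp.sum_apply, Finsupp.smul_apply, Finsupp.single_apply, smul_eq_mul, Sum.inl.injEq,
      Sum.inr.injEq, reduceCtorEq, if_false, mul_zero, mul_ite, mul_one]
  · rw [hb.repr_inl_apply_inl_inl hf]
    simp [Finsupp.sum, eq_comm]
  · rw [hb.repr_inr_apply_inl_inl hf, Finsupp.sum_eq_single (j - m - n)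
      (fun k _ hk => if_neg (by omega)) (by simp), if_pos (by ring), zero_add]
    rfl

theorem repr_inr_apply_inl_inr_of_ne (hb : IsW00Basis_s7 b) (hf : IsBiderivation f) {m n j : ℤ}
    (hjn : j ≠ n) : b.repr (f (b (.inl m)) (b (.inr n))) (.inr j) =
      if j = m + n then -(lieCoeff b f * n) else 0 := by
  have := hb.sub_mul_repr_inr_derivation_inr (hf.derivationRight (b (.inl m))) n j
  simp only [IsBiderivation.derivationRight_apply, hb.repr_inl_apply_inl_inl hf] at this
  by_cases h : j = m + n
  · subst h
    rw [if_pos rfl]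
    rw [if_pos (by ring)] at this
    refine mul_left_cancel₀ (Int.cast_ne_zero.mpr (by omega : m ≠ 0)) ?_
    push_cast at this
    linear_combination this
  · rw [if_neg h]
    rw [if_neg (by omega), mul_zero] at this
    exact eq_zero_of_intCast_sub_mul_eq_zero hjn this

theorem repr_inr_apply_inl_inr (hb : IsW00Basis_s7 b) (hf : IsBiderivation f) (m n j : ℤ) :
    b.repr (f (b (.inl m)) (b (.inr n))) (.inr j) =
      if j = m + n then -(lieCoeff b f * n) else 0 := by
  set d : ℤ → ℤ → ℤ → K := fun m n j => b.repr (f (b (.inl m)) (b (.inr n))) (.inr j)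
  have off_diag : ∀ m j, j ≠ n → d m n j = if j = m + n then -(lieCoeff b f * n) else 0 :=
    fun _ _ => hb.repr_inr_apply_inl_inr_of_ne hf
  have witt : ∀ p q j : ℤ, (p - q) * d (p + q) n j =
      (p - j) * d q n (j - p) - (q - j) * d p n (j - q) :=
    hb.repr_inr_derivation_inl (hf.derivationLeft (b (.inr n)))
  have diag_of_ne : m ≠ 0 → d m n n = 0 := fun hm => by
    have := witt (2 * m) (-m) n
    rw [show 2 * m + -m = m by ring, off_diag (-m) (n - 2 * m) (by omega),
      off_diag (2 * m) (n - -m) (by omega), if_neg (by omega), if_neg (by omega)] at this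
    refine (mul_eq_zero.mp ?_).resolve_left (Int.cast_ne_zero.mpr (by omega : 3 * m ≠ 0))
    push_cast at this ⊢
    linear_combination this
  have diag_zero : d 0 n n = -(lieCoeff b f * n) := by
    have := witt 1 (-1) n
    rw [show (1 : ℤ) + -1 = 0 by ring, off_diag (-1) (n - 1) (by omega),
      off_diag 1 (n - -1) (by omega), if_pos (by ring), if_pos (by ring)] at this
    push_cast at this
    linear_combination this / 2
  show d m n j = _
  split_ifs with h
  · subst h
    rcases eq_or_ne m 0 with rfl | hm
    · simpa using diag_zero
    · simp [off_diag m (m + n) (by omega)]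
  · rcases eq_or_ne j n with rfl | hjn
    · exact diag_of_ne (by omega)
    · simpa [h] using off_diag m j hjn

theorem apply_inl_inr (hb : IsW00Basis_s7 b) (hf : IsBiderivation f) (m n : ℤ) :
    f (b (.inl m)) (b (.inr n)) = lieCoeff b f • ⁅b (.inl m), b (.inr n)⁆ := by
  rw [hb.lie_inl_inr, smul_smul, b.ext_elem_iff]
  rintro (j | j)
  · simpa using hb.repr_inl_derivation_inr_eq_zero (hf.derivationRight (b (.inl m))) n j
  · simp only [hb.repr_inr_apply_inl_inr hf, map_smul, Basis.repr_self, Finsupp.smul_apply,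
      Finsupp.single_apply, Sum.inr.injEq, smul_eq_mul, mul_ite, mul_one, mul_zero, eq_comm]
    ring_nf

theorem lieCoeff_neg_flip (hb : IsW00Basis_s7 b) (hf : IsBiderivation f) :
    lieCoeff b (-f.flip) = lieCoeff b f := by
  have := hb.repr_inl_apply_inl_inl_add hf 0 1
  simp only [zero_add, Int.cast_zero, Int.cast_one, zero_sub, mul_neg, mul_one] at this
  simp [lieCoeff, this]

theorem apply_inr_inl (hb : IsW00Basis_s7 b) (hf : IsBiderivation f) (m n : ℤ) :
    f (b (.inr m)) (b (.inl n)) = lieCoeff b f • ⁅b (.inr m), b (.inl n)⁆ := by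
  have := hb.apply_inl_inr hf.neg_flip n m
  simp only [hb.lieCoeff_neg_flip hf, LinearMap.neg_apply, LinearMap.flip_apply] at this
  rwa [← lie_skew (b (.inl n)), smul_neg, neg_inj] at this

theorem apply_inr_inr (hb : IsW00Basis_s7 b) (hf : IsBiderivation f) (m n : ℤ) :
    f (b (.inr m)) (b (.inr n)) = 0 := by
  have left : ∀ q r, f (b (.inr q)) (b (.inr r)) =
      b.repr (f (b (.inr 1)) (b (.inr r))) (.inr 1) • b (.inr q) := fun q r =>
    hb.derivation_inr_eq_smul (hf.derivationLeft (b (.inr r)))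
      (fun p k => hb.repr_inl_derivation_inr_eq_zero (hf.derivationRight (b (.inl p))) r k) q
  have right : ∀ q r, f (b (.inr q)) (b (.inr r)) =
      b.repr (f (b (.inr q)) (b (.inr 1))) (.inr 1) • b (.inr r) := fun q r =>
    hb.derivation_inr_eq_smul (hf.derivationRight (b (.inr q)))
      (fun p k => hb.repr_inl_derivation_inr_eq_zero (hf.derivationLeft (b (.inl p))) q k) r
  have h := congr(b.repr $((left (n + 1) n).symm.trans (right (n + 1) n)) (.inr (n + 1)))
  simp at h
  rw [left, h, zero_smul]

theorem apply_eq_smul_lie_of_mem_span (hb : IsW00Basis_s7 b) (hf : IsBiderivation f) {x y : W}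
    (h : x ∈ Submodule.span K (Set.range fun n => b (.inr n)) ∨
      y ∈ Submodule.span K (Set.range fun n => b (.inr n))) :
    f x y = lieCoeff b f • ⁅x, y⁆ := by
  let ad : W →ₗ[K] W →ₗ[K] W := lieCoeff b f • (LieAlgebra.ad K W : W →ₗ[K] Module.End K W)
  rcases h with hx | hy
  · have : Set.EqOn f ad (Set.range fun n => b (.inr n)) := by
      rintro _ ⟨q, rfl⟩
      refine b.ext fun i => ?_
      rcases i with r | r
      · simp [ad, hb.apply_inr_inl hf]
      · simp [ad, hb.apply_inr_inr hf, hb.lie_inr_inr]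
    simpa [ad] using LinearMap.congr_fun (LinearMap.eqOn_span' this hx) y
  · have : Set.EqOn f.flip ad.flip (Set.range fun n => b (.inr n)) := by
      rintro _ ⟨q, rfl⟩
      refine b.ext fun i => ?_
      rcases i with r | r
      · simp [ad, hb.apply_inl_inr hf]
      · simp [ad, hb.apply_inr_inr hf, hb.lie_inr_inr]
    simpa [ad] using LinearMap.congr_fun (LinearMap.eqOn_span' this hy) x

end Biderivation

end IsW00Basis_s7

end W00

/-- Lemma 3.8: every biderivation of `W(0,0)` has the form
`f(x,y) = λ·[x,y] + r_μ(x,y)` for some `λ ∈ ℂ` and some finitely supported `μ : ℤ → ℂ`,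
where `r_μ(L_m, L_n) = Σ_k μ(k)·I_{m+n+k}` and `r_μ` vanishes whenever one of its arguments
lies in the span of the `I_n` (so that `f(x,y) = λ·[x,y]` there). -/
theorem stmt7 {W : Type*} [LieRing W] [LieAlgebra ℂ W]
    (b : Module.Basis (ℤ ⊕ ℤ) ℂ W) (L I : ℤ → W)
    (hL : ∀ n : ℤ, L n = b (Sum.inl n))
    (hI : ∀ n : ℤ, I n = b (Sum.inr n))
    (hLL : ∀ m n : ℤ, ⁅L m, L n⁆ = ((m : ℂ) - (n : ℂ)) • L (m + n))
    (hLI : ∀ m n : ℤ, ⁅L m, I n⁆ = (-(n : ℂ)) • I (m + n))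
    (hII : ∀ m n : ℤ, ⁅I m, I n⁆ = 0)
    (f : W →ₗ[ℂ] W →ₗ[ℂ] W)
    (hf1 : ∀ x y z : W, f ⁅x, y⁆ z = ⁅x, f y z⁆ + ⁅f x z, y⁆)
    (hf2 : ∀ x y z : W, f x ⁅y, z⁆ = ⁅f x y, z⁆ + ⁅y, f x z⁆) :
    ∃ (lam : ℂ) (μ : ℤ →₀ ℂ),
      (∀ m n : ℤ,
        f (L m) (L n) = (lam * ((m : ℂ) - (n : ℂ))) • L (m + n)
            + μ.sum (fun k c => c • I (m + n + k)) ∧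
        f (L m) (I n) = (-(lam * (n : ℂ))) • I (m + n) ∧
        f (I n) (L m) = (lam * (n : ℂ)) • I (m + n) ∧
        f (I m) (I n) = 0) ∧
      (∀ x y : W,
        x ∈ Submodule.span ℂ (Set.range I) ∨ y ∈ Submodule.span ℂ (Set.range I) →
          f x y = lam • ⁅x, y⁆) := by
  obtain rfl : L = fun n => b (.inl n) := funext hL
  obtain rfl : I = fun n => b (.inr n) := funext hI
  have hb : IsW00Basis_s7 b := ⟨hLL, hLI, hII⟩
  have hf : IsBiderivation f := ⟨hf1, hf2⟩
  refine ⟨lieCoeff b f, symmCoeff b f, fun m n => ⟨hb.apply_inl_inl hf m n, ?_, ?_,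
    hb.apply_inr_inr hf m n⟩, fun x y h => hb.apply_eq_smul_lie_of_mem_span hf h⟩
  · rw [hb.apply_inl_inr hf, hb.lie_inl_inr, smul_smul, mul_neg]
  · rw [hb.apply_inr_inl hf, hb.lie_inr_inl, smul_smul, add_comm]
end

section
/- A linear map φ : ℋ → ℋ on the twisted Heisenberg–Virasoro algebra is commuting (i.e. [φ(x), x] = 0 for all x ∈ ℋ) if and only if there exist λ ∈ ℂ and a linear map τ : ℋ → Z(ℋ) into the center of ℋ such that φ(x) = λ·x + τ(x) for all x ∈ ℋ; equivalently, φ(x) − λ·x ∈ Z(ℋ) for all x ∈ ℋ. -/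
/-!
Polarizing `⁅φ x, x⁆ = 0` gives `⁅x, φ y⁆ = -⁅y, φ x⁆`. Modulo the central terms, `ad L_m` and
`ad I_m` shift the coordinates of a vector with explicit integer weights, so comparing coordinates
in `⁅L_n, φ L_n⁆ = 0` shows that `φ L_n` has no `L_q`-component for `q ≠ n` and no
`I_q`-component for `q ≠ 0`, and comparing them in `⁅I_m, φ L_n⁆ = -⁅L_n, φ I_m⁆` shows that
`φ I_m` has no `L`-component and that the diagonal coefficients of `φ L_n` and of `φ I_m` (`m ≠ 0`)
all equal one scalar `λ`. As the center contains `I_0` and the `C_s`, `φ - λ • id` then maps every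
basis vector, and hence everything, into the center.
-/

open Module Submodule Set Sum

namespace Module.Basis

variable {ι R M : Type*} [CommRing R] [AddCommGroup M] [Module R M] (b : Basis ι R M)

theorem repr_eq_zero_of_mem_span {s : Set ι} {x : M} (h : x ∈ span R (b '' s)) {i : ι}
    (hi : i ∉ s) : b.repr x i = 0 :=
  Finsupp.notMem_support_iff.1 fun hmem => hi (b.mem_span_image.1 h hmem)

theorem repr_eq_of_sub_mem_span {s : Set ι} {x y : M} (h : x - y ∈ span R (b '' s)) {i : ι}
    (hi : i ∉ s) : b.repr x i = b.repr y i := by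
  rw [← sub_eq_zero, ← Finsupp.sub_apply, ← map_sub, b.repr_eq_zero_of_mem_span h hi]

theorem map_mem_of_forall_basis {N : Type*} [AddCommGroup N] [Module R N] {f : M →ₗ[R] N}
    {p : Submodule R N} (h : ∀ i, f (b i) ∈ p) (x : M) : f x ∈ p := by
  have : (⊤ : Submodule R M) ≤ p.comap f := by
    rw [← b.span_eq, span_le]
    rintro _ ⟨i, rfl⟩
    exact h i
  exact this mem_top

end Module.Basis

section LieAlgebra

variable {R L : Type*} [CommRing R] [LieRing L] [LieAlgebra R L]

theorem lie_map_eq_neg_lie_map {φ : L →ₗ[R] L} (hφ : ∀ x, ⁅φ x, x⁆ = 0) (x y : L) :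
    ⁅x, φ y⁆ = -⁅y, φ x⁆ := by
  have hself : ∀ z, ⁅z, φ z⁆ = 0 := fun z => by rw [← lie_skew, hφ, neg_zero]
  refine eq_neg_of_add_eq_zero_left ?_
  simpa only [map_add, lie_add, add_lie, hself, zero_add, add_zero] using hself (y + x)

theorem map_mem_center_of_commuting {φ : L →ₗ[R] L} (hφ : ∀ x, ⁅φ x, x⁆ = 0) {z : L}
    (hz : z ∈ LieAlgebra.center R L) : φ z ∈ LieAlgebra.center R L := by
  rw [LieAlgebra.center, LieModule.mem_maxTrivSubmodule] at hz ⊢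
  intro y
  rw [lie_map_eq_neg_lie_map hφ y z, ← lie_skew, hz, neg_zero, neg_zero]

theorem commuting_of_eq_smul_add_center {φ τ : L →ₗ[R] L} {c : R}
    (hτ : ∀ x, τ x ∈ LieAlgebra.center R L) (hφ : ∀ x, φ x = c • x + τ x) (x : L) :
    ⁅φ x, x⁆ = 0 := by
  rw [hφ, add_lie, smul_lie, lie_self, smul_zero, zero_add, ← lie_skew,
    (LieModule.mem_maxTrivSubmodule R L L _).1 (hτ x), neg_zero]

namespace Module.Basis

variable {ι : Type*} (b : Basis ι R L)

theorem mem_center_of_forall_lie_eq_zero {z : L} (h : ∀ i, ⁅b i, z⁆ = 0) :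
    z ∈ LieAlgebra.center R L := by
  have hz : LieAlgebra.ad R L z = 0 := b.ext fun i => by
    rw [LieAlgebra.ad_apply R, ← lie_skew, h, neg_zero, LinearMap.zero_apply]
  refine (LieModule.mem_maxTrivSubmodule R L L z).2 fun y => ?_
  rw [← lie_skew, ← LieAlgebra.ad_apply R, hz, LinearMap.zero_apply, neg_zero]

theorem repr_lie_eq_mul_repr {y : L} {i i' : ι} {c : R}
    (h : ∀ j, b.repr ⁅y, b j⁆ i = c * b.repr (b j) i') (x : L) :
    b.repr ⁅y, x⁆ i = c * b.repr x i' := by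
  have key : b.coord i ∘ₗ (LieAlgebra.ad R L y : L →ₗ[R] L) = c • b.coord i' :=
    b.ext fun j => by simpa using h j
  simpa using LinearMap.congr_fun key x

end Module.Basis

end LieAlgebra

section TwistedHeisenbergVirasoro

variable {K H κ : Type*} [CommRing K] [LieRing H] [LieAlgebra K H]

/-- `L n = b (inl n)`, `I n = b (inr (inl n))` and `C s = b (inr (inr s))`; the brackets are
required only modulo the span of the `C s`. -/
structure IsTwistedHeisenbergVirasoroBasis (b : Basis (ℤ ⊕ ℤ ⊕ κ) K H) : Prop where
  lie_L_L (n m : ℤ) : ⁅b (inl n), b (inl m)⁆ - ((n : K) - m) • b (inl (n + m)) ∈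
    span K (b '' range (inr ∘ inr))
  lie_I_L (m n : ℤ) : ⁅b (inr (inl m)), b (inl n)⁆ - (m : K) • b (inr (inl (m + n))) ∈
    span K (b '' range (inr ∘ inr))
  lie_I_I (m n : ℤ) : ⁅b (inr (inl m)), b (inr (inl n))⁆ ∈ span K (b '' range (inr ∘ inr))
  I_zero_mem_center : b (inr (inl 0)) ∈ LieAlgebra.center K H
  C_mem_center (s : κ) : b (inr (inr s)) ∈ LieAlgebra.center K H

namespace IsTwistedHeisenbergVirasoroBasis

variable {b : Basis (ℤ ⊕ ℤ ⊕ κ) K H}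

theorem lie_C_eq_zero (hb : IsTwistedHeisenbergVirasoroBasis b) (s : κ) (x : H) :
    ⁅x, b (inr (inr s))⁆ = 0 :=
  (LieModule.mem_maxTrivSubmodule K H H _).1 (hb.C_mem_center s) x

theorem repr_lie_L_inl (hb : IsTwistedHeisenbergVirasoroBasis b) (m p : ℤ) (x : H) :
    b.repr ⁅b (inl m), x⁆ (inl (m + p)) = ((m : K) - p) * b.repr x (inl p) := by
  refine b.repr_lie_eq_mul_repr (fun j => ?_) x
  rcases j with k | k | s
  · rw [b.repr_eq_of_sub_mem_span (hb.lie_L_L m k) (by simp)]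
    by_cases hk : k = p <;> simp [hk]
  · rw [← lie_skew, map_neg, Finsupp.neg_apply,
      b.repr_eq_of_sub_mem_span (hb.lie_I_L k m) (by simp)]
    simp
  · simp [hb.lie_C_eq_zero]

theorem repr_lie_L_inr_inl (hb : IsTwistedHeisenbergVirasoroBasis b) (m p : ℤ) (x : H) :
    b.repr ⁅b (inl m), x⁆ (inr (inl (m + p))) = -(p : K) * b.repr x (inr (inl p)) := by
  refine b.repr_lie_eq_mul_repr (fun j => ?_) x
  rcases j with k | k | s
  · rw [b.repr_eq_of_sub_mem_span (hb.lie_L_L m k) (by simp)]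
    simp
  · rw [← lie_skew, map_neg, Finsupp.neg_apply,
      b.repr_eq_of_sub_mem_span (hb.lie_I_L k m) (by simp)]
    by_cases hk : k = p
    · simp [hk, add_comm]
    · have hkm : k + m ≠ m + p := by omega
      simp [hk, hkm]
  · simp [hb.lie_C_eq_zero]

theorem repr_lie_I_inl (hb : IsTwistedHeisenbergVirasoroBasis b) (m p : ℤ) (x : H) :
    b.repr ⁅b (inr (inl m)), x⁆ (inl p) = 0 := by
  rw [b.repr_lie_eq_mul_repr (c := 0) (i' := inl p) (fun j => ?_) x, zero_mul]
  rcases j with k | k | s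
  · rw [b.repr_eq_of_sub_mem_span (hb.lie_I_L m k) (by simp)]
    simp
  · simp [b.repr_eq_zero_of_mem_span (hb.lie_I_I m k)]
  · simp [hb.lie_C_eq_zero]

theorem repr_lie_I_inr_inl (hb : IsTwistedHeisenbergVirasoroBasis b) (m p : ℤ) (x : H) :
    b.repr ⁅b (inr (inl m)), x⁆ (inr (inl (m + p))) = (m : K) * b.repr x (inl p) := by
  refine b.repr_lie_eq_mul_repr (fun j => ?_) x
  rcases j with k | k | s
  · rw [b.repr_eq_of_sub_mem_span (hb.lie_I_L m k) (by simp)]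
    by_cases hk : k = p <;> simp [hk]
  · simp [b.repr_eq_zero_of_mem_span (hb.lie_I_I m k)]
  · simp [hb.lie_C_eq_zero]


theorem mem_center_of_repr_eq_zero (hb : IsTwistedHeisenbergVirasoroBasis b) {x : H}
    (hL : ∀ q, b.repr x (inl q) = 0) (hI : ∀ q ≠ 0, b.repr x (inr (inl q)) = 0) :
    x ∈ LieAlgebra.center K H := by
  have hspan : span K (b '' insert (inr (inl 0)) (range (inr ∘ inr))) ≤
      (LieAlgebra.center K H).toSubmodule := by
    rw [span_le]
    rintro _ ⟨j, rfl | ⟨s, rfl⟩, rfl⟩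
    exacts [hb.I_zero_mem_center, hb.C_mem_center s]
  refine hspan (b.mem_span_image.2 fun j hj => ?_)
  rw [Finset.mem_coe, Finsupp.mem_support_iff] at hj
  rcases j with q | q | s
  · exact absurd (hL q) hj
  · obtain rfl : q = 0 := by_contra fun hq => hj (hI q hq)
    exact mem_insert _ _
  · exact mem_insert_of_mem _ ⟨s, rfl⟩

variable {φ : H →ₗ[K] H}

theorem repr_map_I_inl (hb : IsTwistedHeisenbergVirasoroBasis b)
    (hφ : ∀ x, ⁅φ x, x⁆ = 0) (m q : ℤ) : b.repr (φ (b (inr (inl m)))) (inl q) = 0 := by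
  have h := congrArg (b.repr · (inl (q + 1 + q)))
    (lie_map_eq_neg_lie_map hφ (b (inr (inl m))) (b (inl (q + 1))))
  simp only [map_neg, Finsupp.neg_apply, hb.repr_lie_I_inl, hb.repr_lie_L_inl] at h
  simpa using h

variable (b φ) in
/-- The scalar `λ` of the theorem. -/
noncomputable def commutingScalar : K := b.repr (φ (b (inr (inl 1)))) (inr (inl 1))

theorem repr_map_L_inl_self (hb : IsTwistedHeisenbergVirasoroBasis b)
    (hφ : ∀ x, ⁅φ x, x⁆ = 0) (n : ℤ) : b.repr (φ (b (inl n))) (inl n) = commutingScalar b φ :=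
  calc b.repr (φ (b (inl n))) (inl n)
      = b.repr ⁅b (inr (inl 1)), φ (b (inl n))⁆ (inr (inl (1 + n))) := by
        rw [hb.repr_lie_I_inr_inl]; simp
    _ = -b.repr ⁅b (inl n), φ (b (inr (inl 1)))⁆ (inr (inl (n + 1))) := by
        rw [lie_map_eq_neg_lie_map hφ, map_neg, Finsupp.neg_apply, add_comm]
    _ = commutingScalar b φ := by rw [hb.repr_lie_L_inr_inl]; simp [commutingScalar]

variable [IsDomain K] [CharZero K]

theorem repr_map_L_inl_of_ne (hb : IsTwistedHeisenbergVirasoroBasis b)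
    (hφ : ∀ x, ⁅φ x, x⁆ = 0) {n q : ℤ} (hq : q ≠ n) : b.repr (φ (b (inl n))) (inl q) = 0 := by
  have h := hb.repr_lie_L_inl n q (φ (b (inl n)))
  rw [← lie_skew, hφ, neg_zero, map_zero, Finsupp.zero_apply, eq_comm] at h
  exact (mul_eq_zero.1 h).resolve_left (by exact_mod_cast sub_ne_zero.2 hq.symm)

theorem repr_map_L_inr_inl (hb : IsTwistedHeisenbergVirasoroBasis b)
    (hφ : ∀ x, ⁅φ x, x⁆ = 0) (n : ℤ) {q : ℤ} (hq : q ≠ 0) :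
    b.repr (φ (b (inl n))) (inr (inl q)) = 0 := by
  have h := hb.repr_lie_L_inr_inl n q (φ (b (inl n)))
  rw [← lie_skew, hφ, neg_zero, map_zero, Finsupp.zero_apply, eq_comm] at h
  exact (mul_eq_zero.1 h).resolve_left (by exact_mod_cast neg_ne_zero.2 hq)

theorem repr_map_L_inl (hb : IsTwistedHeisenbergVirasoroBasis b)
    (hφ : ∀ x, ⁅φ x, x⁆ = 0) (n q : ℤ) :
    b.repr (φ (b (inl n))) (inl q) = commutingScalar b φ * b.repr (b (inl n)) (inl q) := by
  rcases eq_or_ne q n with rfl | hq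
  · simp [hb.repr_map_L_inl_self hφ]
  · simp [hb.repr_map_L_inl_of_ne hφ hq, hq]

theorem repr_map_I_inr_inl (hb : IsTwistedHeisenbergVirasoroBasis b)
    (hφ : ∀ x, ⁅φ x, x⁆ = 0) (m : ℤ) {q : ℤ} (hq : q ≠ 0) :
    b.repr (φ (b (inr (inl m)))) (inr (inl q)) =
      commutingScalar b φ * b.repr (b (inr (inl m))) (inr (inl q)) := by
  have key : (m : K) * b.repr (φ (b (inl 0))) (inl (q - m)) =
      q * b.repr (φ (b (inr (inl m)))) (inr (inl q)) :=
    calc (m : K) * b.repr (φ (b (inl 0))) (inl (q - m))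
        = b.repr ⁅b (inr (inl m)), φ (b (inl 0))⁆ (inr (inl (m + (q - m)))) :=
          (hb.repr_lie_I_inr_inl m (q - m) _).symm
      _ = -b.repr ⁅b (inl 0), φ (b (inr (inl m)))⁆ (inr (inl (0 + q))) := by
          rw [lie_map_eq_neg_lie_map hφ, map_neg, Finsupp.neg_apply, add_sub_cancel, zero_add]
      _ = q * b.repr (φ (b (inr (inl m)))) (inr (inl q)) := by
          rw [hb.repr_lie_L_inr_inl]; ring
  have hq' : (q : K) ≠ 0 := by exact_mod_cast hq
  rcases eq_or_ne q m with rfl | hqm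
  · rw [sub_self, hb.repr_map_L_inl_self hφ] at key
    simp [mul_left_cancel₀ hq' key]
  · rw [hb.repr_map_L_inl_of_ne hφ (sub_ne_zero.2 hqm), mul_zero, eq_comm] at key
    simp [(mul_eq_zero.1 key).resolve_left hq', hqm]

theorem exists_eq_smul_add_center (hb : IsTwistedHeisenbergVirasoroBasis b)
    (hφ : ∀ x, ⁅φ x, x⁆ = 0) :
    ∃ (c : K) (τ : H →ₗ[K] H), (∀ x, τ x ∈ LieAlgebra.center K H) ∧ ∀ x, φ x = c • x + τ x := by
  set c := commutingScalar b φ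
  set τ : H →ₗ[K] H := φ - c • LinearMap.id
  have hτ : ∀ j i, b.repr (φ (b j)) i = c * b.repr (b j) i → b.repr (τ (b j)) i = 0 :=
    fun j i h => by
      simp only [τ, LinearMap.sub_apply, LinearMap.smul_apply, LinearMap.id_apply, map_sub,
        map_smul, Finsupp.sub_apply, Finsupp.smul_apply, smul_eq_mul, h, sub_self]
  refine ⟨c, τ, b.map_mem_of_forall_basis fun j => ?_, fun x => by simp [τ]⟩
  rcases j with n | m | s
  · exact hb.mem_center_of_repr_eq_zero (fun q => hτ _ _ (hb.repr_map_L_inl hφ n q))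
      fun q hq => hτ (inl n) (inr (inl q)) (by simp [hb.repr_map_L_inr_inl hφ n hq])
  · exact hb.mem_center_of_repr_eq_zero
      (fun q => hτ (inr (inl m)) (inl q) (by simp [hb.repr_map_I_inl hφ]))
      fun q hq => hτ _ _ (hb.repr_map_I_inr_inl hφ m hq)
  · exact sub_mem (map_mem_center_of_commuting hφ (hb.C_mem_center s))
      (smul_mem _ _ (hb.C_mem_center s))

end IsTwistedHeisenbergVirasoroBasis

end TwistedHeisenbergVirasoro

/-- Theorem 4.1: a linear map `φ` on the twisted Heisenberg–Virasoro algebra `ℋ` is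
commuting (`[φ(x), x] = 0` for all `x`) if and only if there exist `λ ∈ ℂ` and a linear map
`τ : ℋ → Z(ℋ)` such that `φ(x) = λ·x + τ(x)` for all `x ∈ ℋ`. -/
theorem stmt10 {H : Type*} [LieRing H] [LieAlgebra ℂ H]
    (b : Module.Basis (ℤ ⊕ ℤ ⊕ Fin 3) ℂ H)
    (L I : ℤ → H) (C₁ C₂ C₃ : H)
    (hL : ∀ n : ℤ, L n = b (Sum.inl n))
    (hI : ∀ n : ℤ, I n = b (Sum.inr (Sum.inl n)))
    (hC₁ : C₁ = b (Sum.inr (Sum.inr 0)))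
    (hC₂ : C₂ = b (Sum.inr (Sum.inr 1)))
    (hC₃ : C₃ = b (Sum.inr (Sum.inr 2)))
    (hLL : ∀ n m : ℤ, ⁅L n, L m⁆ = ((n : ℂ) - (m : ℂ)) • L (n + m)
        + (if n = -m then (((n : ℂ) ^ 3 - (n : ℂ)) / 12) • C₁ else 0))
    (hLI : ∀ n m : ℤ, ⁅L n, I m⁆ = (-(m : ℂ)) • I (n + m)
        - (if n = -m then ((n : ℂ) ^ 2 + (n : ℂ)) • C₂ else 0))
    (hII : ∀ n m : ℤ, ⁅I n, I m⁆ = if n = -m then (n : ℂ) • C₃ else 0)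
    (hC : ∀ x : H, ⁅x, C₁⁆ = 0 ∧ ⁅x, C₂⁆ = 0 ∧ ⁅x, C₃⁆ = 0)
    (φ : H →ₗ[ℂ] H) :
    (∀ x : H, ⁅φ x, x⁆ = 0) ↔
      ∃ (lam : ℂ) (τ : H →ₗ[ℂ] H),
        (∀ x : H, τ x ∈ LieAlgebra.center ℂ H) ∧
        (∀ x : H, φ x = lam • x + τ x) := by
  subst hC₁ hC₂ hC₃
  obtain rfl : L = fun n => b (inl n) := funext hL
  obtain rfl : I = fun n => b (inr (inl n)) := funext hI
  beta_reduce at hLL hLI hII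
  have hcocycle : ∀ (s : Fin 3) (c : ℂ), c • b (inr (inr s)) ∈ span ℂ (b '' range (inr ∘ inr)) :=
    fun s c => smul_mem _ c (subset_span ⟨_, ⟨s, rfl⟩, rfl⟩)
  have hcentral : ∀ (s : Fin 3) (x : H), ⁅x, b (inr (inr s))⁆ = 0 := by
    intro s x
    fin_cases s
    exacts [(hC x).1, (hC x).2.1, (hC x).2.2]
  have hb : IsTwistedHeisenbergVirasoroBasis b :=
    { lie_L_L := fun n m => by
        rw [hLL, add_sub_cancel_left]
        split_ifs
        exacts [hcocycle 0 _, zero_mem _]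
      lie_I_L := fun m n => by
        rw [← lie_skew, hLI, add_comm n m]
        split_ifs <;> simp [hcocycle]
      lie_I_I := fun m n => by
        rw [hII]
        split_ifs
        exacts [hcocycle 2 _, zero_mem _]
      I_zero_mem_center := b.mem_center_of_forall_lie_eq_zero fun j => by
        rcases j with k | k | s
        · rw [hLI]
          split_ifs with h <;> simp [h]
        · rw [hII]
          split_ifs with h <;> simp [h]
        · rw [← lie_skew, hcentral, neg_zero]
      C_mem_center := fun s => b.mem_center_of_forall_lie_eq_zero fun _ => hcentral s _ }
  exact ⟨hb.exists_eq_smul_add_center, fun ⟨_, _, hτ, hφ⟩ => commuting_of_eq_smul_add_center hτ hφ⟩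
end

section
/- Let α, β, ε ∈ ℂ with either (Re ε > 0 and ε⁻¹ ∉ ℤ) or (Re ε = 0 and Im ε > 0), and let (𝒜, ∘) be the graded twisted Heisenberg–Virasoro left-symmetric algebra with these parameters. Then every biderivation f of (𝒜, ∘) — i.e. every bilinear map f : 𝒜 × 𝒜 → 𝒜 with f(x∘y, z) = x∘f(y,z) + f(x,z)∘y and f(x, y∘z) = f(x,y)∘z + y∘f(x,z) for all x, y, z ∈ 𝒜 — is trivial: f(x, y) = 0 for all x, y ∈ 𝒜. -/
/-!
Both partial maps `f (·) z` and `f x (·)` of a biderivation are derivations of `(𝒜, ∘)`.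
Since `L₀ ∘ L₀ = 0` and `L₀ ∘ ·` acts on `L_n, I_n, C_i` by minus the degree, a derivation `d`
sends `L₀` to a left annihilator, so `d` commutes with `L₀ ∘ ·` and preserves degrees.
Hence `f (b i) (b k)` is homogeneous both of degree `deg i` and of degree `deg k`, and vanishes
unless these agree. So `f (·) (b k)` is a derivation vanishing outside the single degree
`deg k`, and such a derivation is zero: in degree `n ≠ 0` because `L_n` and `I_n` are nonzero
multiples of `L_{2n} ∘ L_{-n}` and `L_{2n} ∘ I_{-n}`; in degree `0` because the products of
`L_{±1}, I_{±1}` determine `d L₀, d I₀, d C_i`, using `1 ± ε ≠ 0` and `ε ≠ ε⁻¹`.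
-/

section Derivation

variable {R A : Type*} [CommRing R] [AddCommGroup A] [Module R A]

def IsDerivation (mul : A →ₗ[R] A →ₗ[R] A) (d : A →ₗ[R] A) : Prop :=
  ∀ x y, d (mul x y) = mul x (d y) + mul (d x) y

variable {mul : A →ₗ[R] A →ₗ[R] A} {d : A →ₗ[R] A}

theorem IsDerivation.map_mul_eq_zero (hd : IsDerivation mul d) {x y : A} (hx : d x = 0)
    (hy : d y = 0) : d (mul x y) = 0 := by
  simp [hd x y, hx, hy]

variable {ι : Type*} {b : Module.Basis ι R A}

theorem Module.Basis.repr_apply_of_apply_eq_smul (b : Module.Basis ι R A) {E : A →ₗ[R] A}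
    {c : ι → R} (hE : ∀ i, E (b i) = c i • b i) (v : A) (j : ι) :
    b.repr (E v) j = c j * b.repr v j := by
  have key : (Finsupp.lapply j) ∘ₗ b.repr.toLinearMap ∘ₗ E
      = c j • ((Finsupp.lapply j) ∘ₗ b.repr.toLinearMap) := by
    refine b.ext fun i => ?_
    simp only [LinearMap.comp_apply, LinearMap.smul_apply, LinearEquiv.coe_coe, hE, map_smul,
      Module.Basis.repr_self, Finsupp.lapply_apply, smul_eq_mul]
    by_cases hij : i = j
    · rw [hij]
    · simp [Finsupp.single_eq_of_ne' hij]
  exact LinearMap.congr_fun key v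

variable [IsDomain R]

theorem Module.Basis.repr_apply_eq_zero_of_commute (b : Module.Basis ι R A) {E : A →ₗ[R] A}
    {c : ι → R} (hE : ∀ i, E (b i) = c i • b i) (hcomm : ∀ v, d (E v) = E (d v)) {i j : ι}
    (hij : c i ≠ c j) : b.repr (d (b i)) j = 0 := by
  have h := b.repr_apply_of_apply_eq_smul hE (d (b i)) j
  rw [← hcomm, hE, map_smul, map_smul, Finsupp.smul_apply, smul_eq_mul] at h
  exact (mul_eq_zero.mp (sub_mul (c i) (c j) _ ▸ sub_eq_zero.mpr h)).resolve_left
    (sub_ne_zero.mpr hij)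

/-- As `b i₀ ∘ b i₀ = 0`, the vector `d (b i₀)` lies in the `0`-eigenspace of `b i₀ ∘ ·`, where
only its `b i₀`-coordinate acts on the left; the `b k`-coordinate of `d (b i₀ ∘ b k)` shows that
this coordinate vanishes. -/
theorem IsDerivation.mul_map_eq_zero (hd : IsDerivation mul d) {i₀ k : ι} {c : ι → R}
    (hc : ∀ i, mul (b i₀) (b i) = c i • b i) (hright : ∀ x, mul x (b i₀) = 0)
    (hleft : ∀ j, j ≠ i₀ → c j = 0 → mul (b j) = 0) (hk : c k ≠ 0) :
    mul (d (b i₀)) = 0 := by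
  set v := d (b i₀) with hv_def
  have hEv : mul (b i₀) v = 0 := by
    have h := hd (b i₀) (b i₀)
    rwa [hright, map_zero, hright, add_zero, eq_comm] at h
  have hsupp : ∀ j, c j ≠ 0 → b.repr v j = 0 := fun j hj => by
    have h := b.repr_apply_of_apply_eq_smul hc v j
    rw [hEv, map_zero, Finsupp.zero_apply, eq_comm] at h
    exact (mul_eq_zero.mp h).resolve_left hj
  set a := b.repr v i₀
  have hv : mul v = a • mul (b i₀) := by
    have hmem : v - a • b i₀ ∈ Submodule.span R (b '' {j | j ≠ i₀ ∧ c j = 0}) := by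
      rw [b.mem_span_image]
      intro j hj
      rw [Finset.mem_coe, Finsupp.mem_support_iff, map_sub, map_smul, b.repr_self,
        Finsupp.sub_apply, Finsupp.smul_apply, smul_eq_mul] at hj
      by_cases hji : j = i₀
      · subst hji
        simp [a] at hj
      · refine ⟨hji, by_contra fun hcj => hj ?_⟩
        rw [hsupp j hcj, Finsupp.single_eq_of_ne hji, mul_zero, sub_zero]
    have hker : Submodule.span R (b '' {j | j ≠ i₀ ∧ c j = 0}) ≤ LinearMap.ker mul := by
      rw [Submodule.span_le]
      rintro _ ⟨j, ⟨hj, hcj⟩, rfl⟩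
      exact hleft j hj hcj
    have := hker hmem
    rwa [LinearMap.mem_ker, map_sub, map_smul, sub_eq_zero] at this
  have ha : a * c k = 0 := by
    have h := congrArg (fun w => b.repr w k) (hd (b i₀) (b k))
    rw [← hv_def] at h
    simp only [hc, map_smul, hv, LinearMap.smul_apply, map_add, Finsupp.add_apply,
      Finsupp.smul_apply, smul_eq_mul, b.repr_apply_of_apply_eq_smul hc, b.repr_self,
      Finsupp.single_eq_same] at h
    linear_combination -h
  rw [hv, (mul_eq_zero.mp ha).resolve_right hk, zero_smul]

theorem IsDerivation.repr_apply_eq_zero (hd : IsDerivation mul d) {i₀ k : ι} {c : ι → R}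
    (hc : ∀ i, mul (b i₀) (b i) = c i • b i) (hright : ∀ x, mul x (b i₀) = 0)
    (hleft : ∀ j, j ≠ i₀ → c j = 0 → mul (b j) = 0) (hk : c k ≠ 0) {i j : ι}
    (hij : c i ≠ c j) : b.repr (d (b i)) j = 0 := by
  refine b.repr_apply_eq_zero_of_commute hc (fun v => ?_) hij
  rw [hd, hd.mul_map_eq_zero hc hright hleft hk, LinearMap.zero_apply, add_zero]

theorem IsDerivation.map_eq_zero_of_mul_eq_smul [Module.IsTorsionFree R A]
    (hd : IsDerivation mul d) {x y z : A} {r : R} (hx : d x = 0) (hy : d y = 0) (hr : r ≠ 0)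
    (h : mul x y = r • z) : d z = 0 := by
  have hz := hd.map_mul_eq_zero hx hy
  rw [h, map_smul] at hz
  exact (smul_eq_zero.mp hz).resolve_left hr

end Derivation

namespace TwistedHV

def IsAdmissible (ε : ℂ) : Prop := (0 < ε.re ∧ ∀ n : ℤ, ε⁻¹ ≠ n) ∨ (ε.re = 0 ∧ 0 < ε.im)

theorem IsAdmissible.ne_zero {ε : ℂ} (hε : IsAdmissible ε) : ε ≠ 0 := by
  rintro rfl
  rcases hε with ⟨hre, -⟩ | ⟨-, him⟩
  · simp at hre
  · simp at him

theorem IsAdmissible.one_add_mul_intCast_ne_zero {ε : ℂ} (hε : IsAdmissible ε) (k : ℤ) :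
    1 + ε * k ≠ 0 := by
  intro h
  rcases hε with ⟨-, hinv⟩ | ⟨hre, -⟩
  · exact hinv (-k) (by push_cast; exact inv_eq_of_mul_eq_one_right (by linear_combination -h))
  · simpa [hre] using congrArg Complex.re h

theorem IsAdmissible.one_add_ne_zero {ε : ℂ} (hε : IsAdmissible ε) : 1 + ε ≠ 0 := by
  simpa using hε.one_add_mul_intCast_ne_zero 1

theorem IsAdmissible.one_sub_ne_zero {ε : ℂ} (hε : IsAdmissible ε) : 1 - ε ≠ 0 := by
  simpa [sub_eq_add_neg] using hε.one_add_mul_intCast_ne_zero (-1)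

theorem IsAdmissible.sub_inv_ne_zero {ε : ℂ} (hε : IsAdmissible ε) : ε - ε⁻¹ ≠ 0 := by
  intro h
  field_simp [hε.ne_zero] at h
  exact mul_ne_zero hε.one_add_ne_zero hε.one_sub_ne_zero (by linear_combination -h)

def degree : ℤ ⊕ ℤ ⊕ Fin 3 → ℤ
  | .inl n => n
  | .inr (.inl n) => n
  | .inr (.inr _) => 0

@[simp] theorem degree_inl (n : ℤ) : degree (.inl n) = n := rfl
@[simp] theorem degree_inr_inl (n : ℤ) : degree (.inr (.inl n)) = n := rfl
@[simp] theorem degree_inr_inr (q : Fin 3) : degree (.inr (.inr q)) = 0 := rfl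

structure HasStructureConstants {A : Type*} [AddCommGroup A] [Module ℂ A] (α β ε : ℂ)
    (b : Module.Basis (ℤ ⊕ ℤ ⊕ Fin 3) ℂ A) (L I : ℤ → A) (C₁ C₂ C₃ : A)
    (mul : A →ₗ[ℂ] A →ₗ[ℂ] A) : Prop where
  L_eq : ∀ n : ℤ, L n = b (Sum.inl n)
  I_eq : ∀ n : ℤ, I n = b (Sum.inr (Sum.inl n))
  C₁_eq : C₁ = b (Sum.inr (Sum.inr 0))
  C₂_eq : C₂ = b (Sum.inr (Sum.inr 1))
  C₃_eq : C₃ = b (Sum.inr (Sum.inr 2))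
  mul_L_L : ∀ m n : ℤ, mul (L m) (L n) =
      (-(n : ℂ) * (1 + ε * n) / (1 + ε * ((m : ℂ) + n))) • L (m + n)
        + (if m = -n then
            ((1 / 24 : ℂ) * ((m : ℂ) ^ 3 - m + (ε - ε⁻¹) * (m : ℂ) ^ 2)) • C₁
          else 0)
  mul_L_I : ∀ m n : ℤ, mul (L m) (I n) =
      (-(n : ℂ) * (1 + (1 - ε * n) * α * (if m = -n then (1 : ℂ) else 0))) • I (m + n)
        + (if m = -n then (((m : ℂ) ^ 2 - m + (ε * (m : ℂ) ^ 2 + m) * β)) • C₂ else 0)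
  mul_I_L : ∀ m n : ℤ, mul (I m) (L n) =
      (if m = -n then
        ((n : ℂ) * (1 + ε * n) * α) • I (m + n) + ((n : ℂ) * (1 + ε * n) * β) • C₂
      else 0)
  mul_I_I : ∀ m n : ℤ, mul (I m) (I n) = if m = -n then ((n : ℂ) / 2) • C₃ else 0
  mul_C : ∀ m : ℤ, ∀ c ∈ ({C₁, C₂, C₃} : Set A), ∀ c' ∈ ({C₁, C₂, C₃} : Set A),
      mul c c' = 0 ∧ mul c (L m) = 0 ∧ mul (L m) c = 0 ∧ mul c (I m) = 0 ∧ mul (I m) c = 0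

namespace HasStructureConstants

variable {A : Type*} [AddCommGroup A] [Module ℂ A] {α β ε : ℂ}
  {b : Module.Basis (ℤ ⊕ ℤ ⊕ Fin 3) ℂ A} {L I : ℤ → A} {C₁ C₂ C₃ : A}
  {mul : A →ₗ[ℂ] A →ₗ[ℂ] A}

theorem basis_inr_inr_mem (h : HasStructureConstants α β ε b L I C₁ C₂ C₃ mul) (q : Fin 3) :
    b (.inr (.inr q)) ∈ ({C₁, C₂, C₃} : Set A) := by
  fin_cases q
  · exact .inl h.C₁_eq.symm
  · exact .inr (.inl h.C₂_eq.symm)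
  · exact .inr (.inr h.C₃_eq.symm)

theorem C_mul (h : HasStructureConstants α β ε b L I C₁ C₂ C₃ mul) {c : A}
    (hc : c ∈ ({C₁, C₂, C₃} : Set A)) : mul c = 0 := by
  refine b.ext fun i => ?_
  rcases i with n | n | q
  · rw [← h.L_eq]; exact (h.mul_C n c hc c hc).2.1
  · rw [← h.I_eq]; exact (h.mul_C n c hc c hc).2.2.2.1
  · exact (h.mul_C 0 c hc _ (h.basis_inr_inr_mem q)).1

theorem mul_L_zero_right (h : HasStructureConstants α β ε b L I C₁ C₂ C₃ mul) (x : A) :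
    mul x (L 0) = 0 := by
  suffices mul.flip (L 0) = 0 from LinearMap.congr_fun this x
  refine b.ext fun i => ?_
  rcases i with n | n | q
  · rw [LinearMap.flip_apply, ← h.L_eq, h.mul_L_L]
    by_cases hn : n = 0 <;> simp [hn]
  · rw [LinearMap.flip_apply, ← h.I_eq, h.mul_I_L]
    by_cases hn : n = 0 <;> simp [hn]
  · exact (h.mul_C 0 _ (h.basis_inr_inr_mem q) C₁ (.inl rfl)).2.1

theorem L_zero_mul_basis (h : HasStructureConstants α β ε b L I C₁ C₂ C₃ mul)
    (hε : IsAdmissible ε) (i : ℤ ⊕ ℤ ⊕ Fin 3) :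
    mul (L 0) (b i) = (-(degree i : ℂ)) • b i := by
  rcases i with n | n | q
  · rw [← h.L_eq, h.mul_L_L, zero_add, Int.cast_zero, zero_add,
      mul_div_assoc, div_self (hε.one_add_mul_intCast_ne_zero n)]
    by_cases hn : n = 0 <;> simp [hn]
  · rw [← h.I_eq, h.mul_L_I]
    by_cases hn : n = 0 <;> simp [hn]
  · simp [(h.mul_C 0 _ (h.basis_inr_inr_mem q) C₁ (.inl rfl)).2.2.1]

theorem I_zero_mul (h : HasStructureConstants α β ε b L I C₁ C₂ C₃ mul) : mul (I 0) = 0 := by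
  refine b.ext fun i => ?_
  rcases i with n | n | q
  · rw [← h.L_eq, h.mul_I_L]
    by_cases hn : n = 0 <;> simp [hn]
  · rw [← h.I_eq, h.mul_I_I]
    by_cases hn : n = 0 <;> simp [hn]
  · exact (h.mul_C 0 _ (h.basis_inr_inr_mem q) C₁ (.inl rfl)).2.2.2.2

theorem basis_mul_eq_zero (h : HasStructureConstants α β ε b L I C₁ C₂ C₃ mul)
    {j : ℤ ⊕ ℤ ⊕ Fin 3} (hj : j ≠ .inl 0) (hdeg : degree j = 0) : mul (b j) = 0 := by
  rcases j with n | n | q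
  · exact absurd (by simpa using hdeg) hj
  · obtain rfl : n = 0 := hdeg
    rw [← h.I_eq, h.I_zero_mul]
  · exact h.C_mul (h.basis_inr_inr_mem q)

theorem repr_map_basis_eq_zero (h : HasStructureConstants α β ε b L I C₁ C₂ C₃ mul)
    (hε : IsAdmissible ε) {d : A →ₗ[ℂ] A} (hd : IsDerivation mul d) {i j : ℤ ⊕ ℤ ⊕ Fin 3}
    (hij : degree i ≠ degree j) : b.repr (d (b i)) j = 0 := by
  have hc := h.L_zero_mul_basis hε
  rw [h.L_eq] at hc
  refine hd.repr_apply_eq_zero hc (fun x => h.L_eq 0 ▸ h.mul_L_zero_right x)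
    (fun j hj hdeg => h.basis_mul_eq_zero hj (by simpa using hdeg)) (k := .inl 1) (by simp)
    (by simpa using hij)

theorem L_two_mul_mul_L_neg (h : HasStructureConstants α β ε b L I C₁ C₂ C₃ mul) {n : ℤ}
    (hn : n ≠ 0) : mul (L (2 * n)) (L (-n)) = ((n : ℂ) * (1 - ε * n) / (1 + ε * n)) • L n := by
  rw [h.mul_L_L, if_neg (by omega), add_zero, show 2 * n + -n = n by ring]
  congr 1
  push_cast
  ring

theorem L_two_mul_mul_I_neg (h : HasStructureConstants α β ε b L I C₁ C₂ C₃ mul) {n : ℤ}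
    (hn : n ≠ 0) : mul (L (2 * n)) (I (-n)) = (n : ℂ) • I n := by
  rw [h.mul_L_I, if_neg (by omega), if_neg (by omega), add_zero, show 2 * n + -n = n by ring]
  congr 1
  push_cast
  ring

theorem map_L_zero_and_C₁ (h : HasStructureConstants α β ε b L I C₁ C₂ C₃ mul)
    (hε : IsAdmissible ε) {d : A →ₗ[ℂ] A} (hd : IsDerivation mul d) (hL₁ : d (L 1) = 0)
    (hL_neg : d (L (-1)) = 0) : d (L 0) = 0 ∧ d C₁ = 0 := by
  have e₁ := hd.map_mul_eq_zero hL₁ hL_neg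
  have e₂ := hd.map_mul_eq_zero hL_neg hL₁
  rw [h.mul_L_L] at e₁ e₂
  norm_num at e₁ e₂
  have hL₀ : d (L 0) = 0 := (smul_eq_zero_iff_right (two_ne_zero : (2 : ℂ) ≠ 0)).mp <| by
    linear_combination (norm := module) e₁ - e₂
  have hκ : (1 / 24 : ℂ) * (ε - ε⁻¹) ≠ 0 := mul_ne_zero (by norm_num) hε.sub_inv_ne_zero
  refine ⟨hL₀, (smul_eq_zero_iff_right hκ).mp ?_⟩
  linear_combination (norm := module) e₁ - (1 + -ε) • hL₀

theorem map_I_zero_and_C₂ (h : HasStructureConstants α β ε b L I C₁ C₂ C₃ mul)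
    (hε : IsAdmissible ε) {d : A →ₗ[ℂ] A} (hd : IsDerivation mul d) (hL₁ : d (L 1) = 0)
    (hL_neg : d (L (-1)) = 0) (hI₁ : d (I 1) = 0) (hI_neg : d (I (-1)) = 0) :
    d (I 0) = 0 ∧ d C₂ = 0 := by
  have e₁ := hd.map_mul_eq_zero hI₁ hL_neg
  have e₂ := hd.map_mul_eq_zero hL₁ hI_neg
  have e₃ := hd.map_mul_eq_zero hL_neg hI₁
  rw [h.mul_I_L] at e₁
  rw [h.mul_L_I] at e₂ e₃
  norm_num at e₁ e₂ e₃
  have hcomb : α • d (I 0) + β • d C₂ = 0 := by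
    refine (smul_eq_zero_iff_right (sub_ne_zero.mpr hε.one_sub_ne_zero.symm)).mp ?_
    linear_combination (norm := module) e₁
  have hI₀ : d (I 0) = 0 := by linear_combination (norm := module) e₂ - (1 + ε) • hcomb
  refine ⟨hI₀, (smul_eq_zero_iff_right (two_ne_zero : (2 : ℂ) ≠ 0)).mp ?_⟩
  linear_combination (norm := module) e₃ + (1 - ε) • hcomb + hI₀

theorem map_C₃ (h : HasStructureConstants α β ε b L I C₁ C₂ C₃ mul)
    {d : A →ₗ[ℂ] A} (hd : IsDerivation mul d) (hI₁ : d (I 1) = 0) (hI_neg : d (I (-1)) = 0) :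
    d C₃ = 0 := by
  have e := hd.map_mul_eq_zero hI₁ hI_neg
  rw [h.mul_I_I] at e
  simpa using e

theorem map_basis_eq_zero_of_degree_eq_zero
    (h : HasStructureConstants α β ε b L I C₁ C₂ C₃ mul) (hε : IsAdmissible ε)
    {d : A →ₗ[ℂ] A} (hd : IsDerivation mul d)
    (hL : ∀ m, m ≠ 0 → d (L m) = 0) (hI : ∀ m, m ≠ 0 → d (I m) = 0)
    {i : ℤ ⊕ ℤ ⊕ Fin 3} (hi : degree i = 0) : d (b i) = 0 := by
  obtain ⟨hL₀, hC₁⟩ := h.map_L_zero_and_C₁ hε hd (hL 1 one_ne_zero) (hL (-1) (by norm_num))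
  obtain ⟨hI₀, hC₂⟩ := h.map_I_zero_and_C₂ hε hd (hL 1 one_ne_zero) (hL (-1) (by norm_num))
    (hI 1 one_ne_zero) (hI (-1) (by norm_num))
  have hC₃ := h.map_C₃ hd (hI 1 one_ne_zero) (hI (-1) (by norm_num))
  rcases i with m | m | q
  · obtain rfl : m = 0 := hi
    rwa [← h.L_eq]
  · obtain rfl : m = 0 := hi
    rwa [← h.I_eq]
  · have hq := h.basis_inr_inr_mem q
    simp only [Set.mem_insert_iff, Set.mem_singleton_iff] at hq
    rcases hq with hq | hq | hq <;> rwa [hq]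

theorem map_basis_eq_zero_of_degree_ne_zero
    (h : HasStructureConstants α β ε b L I C₁ C₂ C₃ mul) (hε : IsAdmissible ε)
    {d : A →ₗ[ℂ] A} (hd : IsDerivation mul d) {n : ℤ} (hn : n ≠ 0)
    (hL : ∀ m, m ≠ n → d (L m) = 0) (hI : ∀ m, m ≠ n → d (I m) = 0)
    {i : ℤ ⊕ ℤ ⊕ Fin 3} (hi : degree i = n) : d (b i) = 0 := by
  have hn' : (n : ℂ) ≠ 0 := Int.cast_ne_zero.mpr hn
  have hcoeff : (n : ℂ) * (1 - ε * n) / (1 + ε * n) ≠ 0 := by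
    refine div_ne_zero (mul_ne_zero hn' ?_) (hε.one_add_mul_intCast_ne_zero n)
    simpa [sub_eq_add_neg] using hε.one_add_mul_intCast_ne_zero (-n)
  rcases i with m | m | q
  · obtain rfl : m = n := hi
    rw [← h.L_eq]
    exact hd.map_eq_zero_of_mul_eq_smul (hL _ (by omega)) (hL _ (by omega)) hcoeff
      (h.L_two_mul_mul_L_neg hn)
  · obtain rfl : m = n := hi
    rw [← h.I_eq]
    exact hd.map_eq_zero_of_mul_eq_smul (hL _ (by omega)) (hI _ (by omega)) hn'
      (h.L_two_mul_mul_I_neg hn)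
  · exact absurd hi.symm hn

theorem derivation_eq_zero (h : HasStructureConstants α β ε b L I C₁ C₂ C₃ mul)
    (hε : IsAdmissible ε) {d : A →ₗ[ℂ] A} (hd : IsDerivation mul d) (n : ℤ)
    (hvan : ∀ i, degree i ≠ n → d (b i) = 0) : d = 0 := by
  have hL : ∀ m, m ≠ n → d (L m) = 0 := fun m hm => h.L_eq m ▸ hvan (.inl m) hm
  have hI : ∀ m, m ≠ n → d (I m) = 0 := fun m hm => h.I_eq m ▸ hvan (.inr (.inl m)) hm
  refine b.ext fun i => ?_
  by_cases hi : degree i = n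
  · rw [LinearMap.zero_apply]
    rcases eq_or_ne n 0 with rfl | hn
    · exact h.map_basis_eq_zero_of_degree_eq_zero hε hd hL hI hi
    · exact h.map_basis_eq_zero_of_degree_ne_zero hε hd hn hL hI hi
  · exact hvan i hi

end HasStructureConstants

end TwistedHV

/-- Theorem 4.9: every biderivation of the graded twisted Heisenberg–Virasoro
left-symmetric algebra `(𝒜, ∘)` (with parameters `α, β, ε` satisfying `Re ε > 0, ε⁻¹ ∉ ℤ`
or `Re ε = 0, Im ε > 0`) is trivial. -/
theorem stmt14 {A : Type*} [AddCommGroup A] [Module ℂ A]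
    (α β ε : ℂ)
    (hε : (0 < ε.re ∧ ∀ n : ℤ, ε⁻¹ ≠ (n : ℂ)) ∨ (ε.re = 0 ∧ 0 < ε.im))
    (b : Module.Basis (ℤ ⊕ ℤ ⊕ Fin 3) ℂ A)
    (L I : ℤ → A) (C₁ C₂ C₃ : A)
    (hL : ∀ n : ℤ, L n = b (Sum.inl n))
    (hI : ∀ n : ℤ, I n = b (Sum.inr (Sum.inl n)))
    (hC₁ : C₁ = b (Sum.inr (Sum.inr 0)))
    (hC₂ : C₂ = b (Sum.inr (Sum.inr 1)))
    (hC₃ : C₃ = b (Sum.inr (Sum.inr 2)))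
    -- the left-symmetric product `∘` of the graded twisted Heisenberg–Virasoro
    -- left-symmetric algebra:
    (mul : A →ₗ[ℂ] A →ₗ[ℂ] A)
    (hLL : ∀ m n : ℤ, mul (L m) (L n) =
      (-(n : ℂ) * (1 + ε * n) / (1 + ε * ((m : ℂ) + n))) • L (m + n)
        + (if m = -n then
            ((1 / 24 : ℂ) * ((m : ℂ) ^ 3 - m + (ε - ε⁻¹) * (m : ℂ) ^ 2)) • C₁
          else 0))
    (hLI : ∀ m n : ℤ, mul (L m) (I n) =
      (-(n : ℂ) * (1 + (1 - ε * n) * α * (if m = -n then (1 : ℂ) else 0))) • I (m + n)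
        + (if m = -n then (((m : ℂ) ^ 2 - m + (ε * (m : ℂ) ^ 2 + m) * β)) • C₂ else 0))
    (hIL : ∀ m n : ℤ, mul (I m) (L n) =
      (if m = -n then
        ((n : ℂ) * (1 + ε * n) * α) • I (m + n) + ((n : ℂ) * (1 + ε * n) * β) • C₂
      else 0))
    (hII : ∀ m n : ℤ, mul (I m) (I n) = if m = -n then ((n : ℂ) / 2) • C₃ else 0)
    (hCzero : ∀ m : ℤ, ∀ c ∈ ({C₁, C₂, C₃} : Set A), ∀ c' ∈ ({C₁, C₂, C₃} : Set A),
      mul c c' = 0 ∧ mul c (L m) = 0 ∧ mul (L m) c = 0 ∧ mul c (I m) = 0 ∧ mul (I m) c = 0)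
    -- `f` is a biderivation of `(𝒜, ∘)`:
    (f : A →ₗ[ℂ] A →ₗ[ℂ] A)
    (hf1 : ∀ x y z : A, f (mul x y) z = mul x (f y z) + mul (f x z) y)
    (hf2 : ∀ x y z : A, f x (mul y z) = mul (f x y) z + mul y (f x z)) :
    ∀ x y : A, f x y = 0 := by
  have h : TwistedHV.HasStructureConstants α β ε b L I C₁ C₂ C₃ mul :=
    ⟨hL, hI, hC₁, hC₂, hC₃, hLL, hLI, hIL, hII, hCzero⟩
  have hder₁ (z : A) : IsDerivation mul (f.flip z) := fun x y => hf1 x y z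
  have hder₂ (x : A) : IsDerivation mul (f x) := fun y z => (hf2 x y z).trans (add_comm _ _)
  have hoff : ∀ i k, TwistedHV.degree i ≠ TwistedHV.degree k → f (b i) (b k) = 0 := by
    intro i k hik
    refine b.repr.map_eq_zero_iff.mp (Finsupp.ext fun j => ?_)
    by_cases hji : TwistedHV.degree j = TwistedHV.degree i
    · exact h.repr_map_basis_eq_zero hε (hder₂ (b i)) (hji ▸ hik).symm
    · exact h.repr_map_basis_eq_zero hε (hder₁ (b k)) (Ne.symm hji)
  have hflip : f.flip = 0 := b.ext fun k =>
    h.derivation_eq_zero hε (hder₁ (b k)) (TwistedHV.degree k) fun i hi => hoff i k hi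
  intro x y
  simpa using LinearMap.congr_fun₂ hflip y x
end
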